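/- arXiv:2406.14665 — 8 statements merged into one kernel-verified Lean document; each statement's English description precedes it below -/
import Mathlib

section
/- Let R be an associative unital ring (not necessarily commutative), let Q be a countably generated projective right R-module, and let I = Tr_R(Q) be its trace ideal. If P₁ and P₂ are countably generated projective right R-modules such that P₁/P₁I and P₂/P₂I are isomorphic as R-modules, then Q^{(ω)} ⊕ P₁ ≅ Q^{(ω)} ⊕ P₂, where Q^{(ω)} denotes the direct sum of countably infinitely many copies of Q. -/
/-!
Lift the isomorphism `P₁/P₁I ≅ P₂/P₂I` to maps `f : P₁ → P₂` and `g : P₂ → P₁`. Then `1 - gf` and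
`1 - fg` take values in `P₁I` and `P₂I`, which lie in the trace of `Q`. As `P₂` is countably
generated, the image of `1 - fg` is covered by a single map `h : Q^(ℕ) → P₂`, so
`(h, f) : Q^(ℕ) ⊕ P₁ → P₂` is onto. Its kernel `A` is a countably generated projective summand of
`Q^(ℕ) ⊕ P₁` contained in the trace of `Q`, hence a quotient and thus a summand of `Q^(ℕ)`, and
the Eilenberg swindle gives `Q^(ℕ) ⊕ A ≅ Q^(ℕ)`. Therefore
`Q^(ℕ) ⊕ P₁ ≅ Q^(ℕ) ⊕ Q^(ℕ) ⊕ P₁ ≅ Q^(ℕ) ⊕ A ⊕ P₂ ≅ Q^(ℕ) ⊕ P₂`.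
-/

open scoped DirectSum

universe u

/-- For a two-sided ideal `I` of `R` and a module `P`, the submodule `PI`
(written for left modules as the span of all `a • p` with `a ∈ I`). -/
def idealSMulSubmodule {R : Type u} [Ring R] (I : Ideal R) (P : Type u)
    [AddCommGroup P] [Module R P] : Submodule R P :=
  Submodule.span R {x : P | ∃ a ∈ I, ∃ p : P, x = a • p}

open LinearMap Submodule

theorem Submodule.exists_seq_subset_iSup {R M ι : Type*} [Ring R] [AddCommGroup M] [Module R M]
    [Nonempty ι] {p : ι → Submodule R M} {G : Set M} (hG : G.Countable)
    (hGp : G ⊆ (⨆ i, p i : Submodule R M)) :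
    ∃ e : ℕ → ι, G ⊆ (⨆ n, p (e n) : Submodule R M) := by
  have := hG.to_subtype
  choose s hs using fun x : G => mem_iSup_iff_exists_finset.1 (hGp x.2)
  obtain ⟨e, he⟩ := Set.countable_iff_exists_subset_range.1
    (Set.countable_iUnion fun x : G => (s x).countable_toSet)
  refine ⟨e, fun x hx => (iSup₂_le fun i hi => ?_ : ⨆ i ∈ s ⟨x, hx⟩, p i ≤ _) (hs ⟨x, hx⟩)⟩
  obtain ⟨n, rfl⟩ := he (Set.mem_iUnion.2 ⟨⟨x, hx⟩, hi⟩)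
  exact le_iSup (fun n => p (e n)) n

namespace Module

variable {R : Type*} [Ring R]
  {Q M N : Type*} [AddCommGroup Q] [Module R Q] [AddCommGroup M] [Module R M]
  [AddCommGroup N] [Module R N]

section Equivs

variable (R M N) in
noncomputable def finsuppProdLEquivProdFinsupp (α : Type*) :
    (α →₀ M × N) ≃ₗ[R] (α →₀ M) × (α →₀ N) :=
  LinearEquiv.ofLinearMap
    ((Finsupp.mapRange.linearMap (fst R M N)).prod (Finsupp.mapRange.linearMap (snd R M N)))
    ((Finsupp.mapRange.linearMap (inl R M N)).coprod (Finsupp.mapRange.linearMap (inr R M N)))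
    (by ext <;> simp)
    (Finsupp.lhom_ext fun a b => by simp [← Finsupp.single_add])

variable (R M) in
noncomputable def finsuppNatLEquivProd : (ℕ →₀ M) ≃ₗ[R] M × (ℕ →₀ M) :=
  (Finsupp.domLCongr ((Equiv.sumComm PUnit.{1} ℕ).trans Equiv.natSumPUnitEquivNat)).symm ≪≫ₗ
    Finsupp.sumFinsuppLEquivProdFinsupp R ≪≫ₗ
    (Finsupp.uniqueLinearEquiv R M PUnit.unit).prodCongr (LinearEquiv.refl R (ℕ →₀ M))

variable (R M) in
noncomputable def finsuppNatLEquivFinsuppFinsupp : (ℕ →₀ M) ≃ₗ[R] (ℕ →₀ ℕ →₀ M) :=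
  Finsupp.domLCongr Nat.pairEquiv.symm ≪≫ₗ Finsupp.curryLinearEquiv R

/-- With `M ≅ K^(ℕ) ⊕ A^(ℕ)`, the summand `A` is absorbed by shifting `A^(ℕ)`. -/
noncomputable def eilenbergSwindle {A K : Type*} [AddCommGroup A] [Module R A] [AddCommGroup K]
    [Module R K] (eM : M ≃ₗ[R] (ℕ →₀ M)) (eA : M ≃ₗ[R] K × A) : (M × A) ≃ₗ[R] M :=
  let F : M ≃ₗ[R] (ℕ →₀ K) × (ℕ →₀ A) :=
    eM ≪≫ₗ Finsupp.mapRange.linearEquiv eA ≪≫ₗ finsuppProdLEquivProdFinsupp R K A ℕ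
  F.prodCongr (LinearEquiv.refl R A) ≪≫ₗ LinearEquiv.prodAssoc R _ _ _ ≪≫ₗ
    (LinearEquiv.refl R _).prodCongr
      (LinearEquiv.prodComm R _ _ ≪≫ₗ (finsuppNatLEquivProd R A).symm) ≪≫ₗ F.symm

end Equivs

section Projective

instance Projective.finsupp {ι : Type*} [Projective R Q] : Projective R (ι →₀ Q) := by
  classical exact .of_equiv (finsuppLEquivDirectSum R Q ι).symm

theorem exists_linearEquiv_ker_prod [Projective R N] (π : M →ₗ[R] N)
    (hπ : Function.Surjective π) :
    ∃ e : M ≃ₗ[R] ker π × N, ∀ k : ker π, e k = (k, 0) := by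
  obtain ⟨σ, hσ⟩ := projective_lifting_property π LinearMap.id hπ
  obtain ⟨e, he, -⟩ :=
    (exact_subtype_ker_map π).splitSurjectiveEquiv (ker π).injective_subtype ⟨σ, hσ⟩
  exact ⟨e, fun k => e.symm.injective (by simpa using LinearMap.congr_fun he k)⟩

theorem exists_lifts_of_quotient_equiv {P₁ P₂ : Type*} [AddCommGroup P₁] [Module R P₁]
    [Projective R P₁] [AddCommGroup P₂] [Module R P₂] [Projective R P₂]
    {N₁ : Submodule R P₁} {N₂ : Submodule R P₂} (ψ : (P₁ ⧸ N₁) ≃ₗ[R] (P₂ ⧸ N₂)) :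
    ∃ (f : P₁ →ₗ[R] P₂) (g : P₂ →ₗ[R] P₁),
      (∀ p, p - g (f p) ∈ N₁) ∧ ∀ p, p - f (g p) ∈ N₂ := by
  obtain ⟨f, hf⟩ :=
    projective_lifting_property N₂.mkQ (ψ.toLinearMap ∘ₗ N₁.mkQ) N₂.mkQ_surjective
  obtain ⟨g, hg⟩ :=
    projective_lifting_property N₁.mkQ (ψ.symm.toLinearMap ∘ₗ N₂.mkQ) N₁.mkQ_surjective
  have hf' (p) : N₂.mkQ (f p) = ψ (N₁.mkQ p) := LinearMap.congr_fun hf p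
  have hg' (p) : N₁.mkQ (g p) = ψ.symm (N₂.mkQ p) := LinearMap.congr_fun hg p
  refine ⟨f, g, fun p => ?_, fun p => ?_⟩
  · rw [← Submodule.Quotient.eq, ← N₁.mkQ_apply, ← N₁.mkQ_apply, hg', hf', ψ.symm_apply_apply]
  · rw [← Submodule.Quotient.eq, ← N₂.mkQ_apply, ← N₂.mkQ_apply, hf', hg', ψ.apply_symm_apply]

end Projective

variable (R M) in
def CountablyGenerated : Prop :=
  ∃ S : Set M, S.Countable ∧ span R S = ⊤

namespace CountablyGenerated

theorem of_surjective (hM : CountablyGenerated R M) (w : M →ₗ[R] N)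
    (hw : Function.Surjective w) : CountablyGenerated R N := by
  obtain ⟨S, hS, hSspan⟩ := hM
  exact ⟨w '' S, hS.image w, by rw [span_image, hSspan, Submodule.map_top, range_eq_top.2 hw]⟩

theorem prod (hM : CountablyGenerated R M) (hN : CountablyGenerated R N) :
    CountablyGenerated R (M × N) := by
  obtain ⟨S, hS, hSspan⟩ := hM
  obtain ⟨T, hT, hTspan⟩ := hN
  refine ⟨inl R M N '' S ∪ inr R M N '' T, (hS.image _).union (hT.image _), ?_⟩
  rw [span_union, span_image, span_image, hSspan, hTspan, Submodule.map_top, Submodule.map_top,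
    sup_range_inl_inr]

theorem finsupp (hQ : CountablyGenerated R Q) : CountablyGenerated R (ℕ →₀ Q) := by
  obtain ⟨S, hS, hSspan⟩ := hQ
  refine ⟨⋃ n, Finsupp.lsingle (R := R) n '' S, Set.countable_iUnion fun n => hS.image _, ?_⟩
  simp_rw [span_iUnion, span_image, hSspan, Submodule.map_top, Finsupp.iSup_lsingle_range]

end CountablyGenerated

section Trace

variable (R Q M) in
/-- The trace of `Q` in `M`; for `M = R` it is the trace ideal `Tr_R(Q)`. -/
def traceSubmodule : Submodule R M :=
  ⨆ u : Q →ₗ[R] M, range u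

theorem range_le_traceSubmodule (u : Q →ₗ[R] M) : range u ≤ traceSubmodule R Q M :=
  le_iSup (fun u : Q →ₗ[R] M => range u) u

theorem map_traceSubmodule_le (w : M →ₗ[R] N) :
    (traceSubmodule R Q M).map w ≤ traceSubmodule R Q N := by
  rw [traceSubmodule, Submodule.map_iSup]
  exact iSup_le fun u => (range_comp u w).ge.trans (range_le_traceSubmodule _)

theorem idealSMulSubmodule_traceSubmodule_le {R : Type u} [Ring R] {Q M : Type u}
    [AddCommGroup Q] [Module R Q] [AddCommGroup M] [Module R M] :
    idealSMulSubmodule (traceSubmodule R Q R) M ≤ traceSubmodule R Q M := by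
  rw [idealSMulSubmodule, span_le]
  rintro _ ⟨a, ha, p, rfl⟩
  exact map_traceSubmodule_le (toSpanSingleton R M p) ⟨a, ha, rfl⟩

theorem prod_traceSubmodule_le :
    (traceSubmodule R Q M).prod (traceSubmodule R Q N) ≤ traceSubmodule R Q (M × N) := by
  rw [LinearMap.prod_eq_sup_map]
  exact sup_le (map_traceSubmodule_le _) (map_traceSubmodule_le _)

theorem range_finsupp_le_traceSubmodule {ι : Type*} (w : (ι →₀ Q) →ₗ[R] M) :
    range w ≤ traceSubmodule R Q M := by
  rw [range_eq_map, ← Finsupp.iSup_lsingle_range, Submodule.map_iSup]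
  exact iSup_le fun i => (range_comp _ w).ge.trans (range_le_traceSubmodule _)

theorem traceSubmodule_eq_top_of_retract (A : Submodule R M) (r : M →ₗ[R] A)
    (hr : ∀ a : A, r a = a) (hA : A ≤ traceSubmodule R Q M) :
    traceSubmodule R Q A = ⊤ := by
  refine eq_top_iff.2 fun a _ => ?_
  rw [← hr a]
  exact map_traceSubmodule_le r (mem_map_of_mem (hA a.2))

theorem exists_span_le_range_finsupp {G : Set M} (hG : G.Countable)
    (hGt : G ⊆ traceSubmodule R Q M) :
    ∃ v : (ℕ →₀ Q) →ₗ[R] M, span R G ≤ range v := by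
  obtain ⟨e, he⟩ := exists_seq_subset_iSup hG hGt
  refine ⟨Finsupp.lsum ℕ e, span_le.2 (he.trans (SetLike.coe_mono (iSup_le fun n => ?_)))⟩
  rw [← Finsupp.lsum_comp_lsingle ℕ e n]
  exact range_comp_le_range _ _

theorem exists_range_le_range_finsupp (hN : CountablyGenerated R N) (w : N →ₗ[R] M)
    (hw : range w ≤ traceSubmodule R Q M) :
    ∃ v : (ℕ →₀ Q) →ₗ[R] M, range w ≤ range v := by
  obtain ⟨S, hS, hSspan⟩ := hN
  have hspan : span R (w '' S) = range w := by rw [span_image, hSspan, Submodule.map_top]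
  obtain ⟨v, hv⟩ := exists_span_le_range_finsupp (hS.image w) (hspan ▸ subset_span |>.trans hw)
  exact ⟨v, hspan ▸ hv⟩

theorem exists_surjective_finsupp (hM : CountablyGenerated R M)
    (htop : traceSubmodule R Q M = ⊤) :
    ∃ v : (ℕ →₀ Q) →ₗ[R] M, Function.Surjective v := by
  obtain ⟨v, hv⟩ := exists_range_le_range_finsupp hM LinearMap.id (range_id.trans htop.symm).le
  exact ⟨v, range_eq_top.1 (top_le_iff.1 (range_id.symm.trans_le hv))⟩

end Trace

theorem exists_surjective_prod_ker_le_traceSubmodule {P₁ P₂ : Type*} [AddCommGroup P₁]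
    [Module R P₁] [AddCommGroup P₂] [Module R P₂] (hP₂ : CountablyGenerated R P₂)
    (f : P₁ →ₗ[R] P₂) (g : P₂ →ₗ[R] P₁) (hgf : ∀ p, p - g (f p) ∈ traceSubmodule R Q P₁)
    (hfg : ∀ p, p - f (g p) ∈ traceSubmodule R Q P₂) :
    ∃ π : (ℕ →₀ Q) × P₁ →ₗ[R] P₂,
      Function.Surjective π ∧ ker π ≤ traceSubmodule R Q ((ℕ →₀ Q) × P₁) := by
  obtain ⟨h, hh⟩ := exists_range_le_range_finsupp hP₂ (LinearMap.id - f ∘ₗ g)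
    (by rintro _ ⟨p, rfl⟩; exact hfg p)
  refine ⟨h.coprod f, fun p => ?_, ?_⟩
  · obtain ⟨x, hx⟩ := hh ⟨p, rfl⟩
    exact ⟨(x, g p), by simp [hx]⟩
  · rintro ⟨x, p⟩ hk
    have hfp : f p = -h x := eq_neg_of_add_eq_zero_right hk
    refine prod_traceSubmodule_le ⟨range_finsupp_le_traceSubmodule LinearMap.id ⟨x, rfl⟩, ?_⟩
    have hp : p = (p - g (f p)) - g (h x) := by rw [hfp, map_neg]; abel
    rw [hp]
    exact sub_mem (hgf p) (range_finsupp_le_traceSubmodule (g ∘ₗ h) ⟨x, rfl⟩)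

theorem nonempty_finsupp_prod_equiv_of_ker_le_traceSubmodule {P : Type*} [AddCommGroup P]
    [Module R P] [Projective R Q] [Projective R M] [Projective R P]
    (hM : CountablyGenerated R M) (π : M →ₗ[R] P) (hπ : Function.Surjective π)
    (hker : ker π ≤ traceSubmodule R Q M) :
    Nonempty (((ℕ →₀ Q) × M) ≃ₗ[R] ((ℕ →₀ Q) × P)) := by
  obtain ⟨e, he⟩ := exists_linearEquiv_ker_prod π hπ
  let r : M →ₗ[R] ker π := fst R _ _ ∘ₗ e.toLinearMap
  have hr (k : ker π) : r k = k := by simp [r, he]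
  have : Projective R (ker π) := .of_split (ker π).subtype r (LinearMap.ext hr)
  obtain ⟨v, hv⟩ := exists_surjective_finsupp (Q := Q) (hM.of_surjective r fun k => ⟨k, hr k⟩)
    (traceSubmodule_eq_top_of_retract _ r hr hker)
  obtain ⟨e', -⟩ := exists_linearEquiv_ker_prod v hv
  exact ⟨(LinearEquiv.refl R _).prodCongr e ≪≫ₗ (LinearEquiv.prodAssoc R _ _ _).symm ≪≫ₗ
    (eilenbergSwindle (finsuppNatLEquivFinsuppFinsupp R Q) e').prodCongr (LinearEquiv.refl R P)⟩

end Module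

open Module

/-- Let `R` be a ring, `Q` a countably generated projective `R`-module with
trace ideal `I = Tr_R(Q)`.  If `P₁`, `P₂` are countably generated projective `R`-modules with
`P₁/P₁I ≅ P₂/P₂I`, then `Q^{(ω)} ⊕ P₁ ≅ Q^{(ω)} ⊕ P₂`. -/
theorem stmt0 (R : Type u) [Ring R]
    (Q : Type u) [AddCommGroup Q] [Module R Q] [Module.Projective R Q]
    (hQcg : ∃ S : Set Q, S.Countable ∧ Submodule.span R S = ⊤)
    (I : Ideal R) (hI : I = ⨆ f : Q →ₗ[R] R, LinearMap.range f)
    (P₁ : Type u) [AddCommGroup P₁] [Module R P₁] [Module.Projective R P₁]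
    (hP₁ : ∃ S : Set P₁, S.Countable ∧ Submodule.span R S = ⊤)
    (P₂ : Type u) [AddCommGroup P₂] [Module R P₂] [Module.Projective R P₂]
    (hP₂ : ∃ S : Set P₂, S.Countable ∧ Submodule.span R S = ⊤)
    (hiso : Nonempty ((P₁ ⧸ idealSMulSubmodule I P₁) ≃ₗ[R] (P₂ ⧸ idealSMulSubmodule I P₂))) :
    Nonempty (((⨁ _ : ℕ, Q) × P₁) ≃ₗ[R] ((⨁ _ : ℕ, Q) × P₂)) := by
  subst hI
  obtain ⟨ψ⟩ := hiso
  obtain ⟨f, g, hgf, hfg⟩ := exists_lifts_of_quotient_equiv ψ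
  obtain ⟨π, hπ, hker⟩ := exists_surjective_prod_ker_le_traceSubmodule hP₂ f g
    (fun p => idealSMulSubmodule_traceSubmodule_le (hgf p))
    (fun p => idealSMulSubmodule_traceSubmodule_le (hfg p))
  obtain ⟨e⟩ := nonempty_finsupp_prod_equiv_of_ker_le_traceSubmodule
    ((CountablyGenerated.finsupp hQcg).prod hP₁) π hπ hker
  let toDirectSum := finsuppLEquivDirectSum R Q ℕ
  let double : ((ℕ →₀ Q) × (ℕ →₀ Q)) ≃ₗ[R] (ℕ →₀ Q) :=
    eilenbergSwindle (finsuppNatLEquivFinsuppFinsupp R Q)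
      (LinearEquiv.uniqueProd (M₂ := PUnit)).symm
  exact ⟨toDirectSum.symm.prodCongr (LinearEquiv.refl R P₁) ≪≫ₗ
    double.symm.prodCongr (LinearEquiv.refl R P₁) ≪≫ₗ LinearEquiv.prodAssoc R _ _ _ ≪≫ₗ e ≪≫ₗ
    toDirectSum.prodCongr (LinearEquiv.refl R P₂)⟩
end

section
/- Let R be a commutative integral domain and Λ an associative unital R-algebra. Let M and N be finitely generated Λ-modules which are torsion-free as R-modules. If M_𝔪 is a direct summand of N_𝔪 (as Λ_𝔪-modules) for every maximal ideal 𝔪 of R, then there exists an integer k > 0 such that M is a direct summand of N^k. -/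
/-!
The `r ∈ R` for which multiplication by `r` on `M` factors through some `N^k` form an ideal
(add factorizations by taking direct sums). Since `M` and `N` are finitely generated, a splitting
`M_𝔪 → N_𝔪 → M_𝔪` descends, after clearing denominators, to maps `M → N → M`, and as
`M → M_𝔪` is injective (torsion-freeness) their composite is multiplication by some `s ∉ 𝔪`.
So the ideal lies in no maximal ideal and contains `1`.
-/

open TensorProduct

universe u

section BaseChange

variable (R : Type*) [CommRing R] (Λ : Type*) [Ring Λ] [Algebra R Λ]
  (M : Type*) [AddCommGroup M] [Module R M] [Module Λ M] [IsScalarTower R Λ M]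

noncomputable def tmulOne (A : Type*) [CommRing A] [Algebra R A] : M →ₗ[Λ] M ⊗[R] A :=
  LinearMap.applyₗ' Λ (1 : A) ∘ₗ AlgebraTensorModule.mk R Λ M A

variable {R Λ M}

instance isLocalizedModule_tmulOne (S : Submonoid R) :
    IsLocalizedModule S ((tmulOne R Λ M (Localization S)).restrictScalars R) := by
  have : (tmulOne R Λ M (Localization S)).restrictScalars R =
      (TensorProduct.comm R (Localization S) M).toLinearMap ∘ₗ
        TensorProduct.mk R (Localization S) M 1 := by
    ext m; rfl
  rw [this]
  infer_instance

lemma tmulOne_injective [NoZeroSMulDivisors R M] {S : Submonoid R} (hS : (0 : R) ∉ S) :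
    Function.Injective (tmulOne R Λ M (Localization S)) := by
  refine (injective_iff_map_eq_zero _).2 fun m hm => ?_
  obtain ⟨s, hs⟩ :=
    (IsLocalizedModule.eq_zero_iff S ((tmulOne R Λ M (Localization S)).restrictScalars R)).1 hm
  rw [Submonoid.smul_def] at hs
  exact (eq_zero_or_eq_zero_of_smul_eq_zero hs).resolve_left fun h => hS (h ▸ s.2)

end BaseChange

section Descent

variable {R : Type*} [CommRing R] {Λ : Type*} [Ring Λ] [Algebra R Λ]
  {M : Type*} [AddCommGroup M] [Module Λ M]
  {N : Type*} [AddCommGroup N] [Module R N] [Module Λ N] [IsScalarTower R Λ N]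
  {S : Submonoid R}

lemma exists_tmulOne_comp_eq_smul [Module.Finite Λ M] [NoZeroSMulDivisors R N] (hS : (0 : R) ∉ S)
    (φ : M →ₗ[Λ] N ⊗[R] Localization S) :
    ∃ s ∈ S, ∃ φ₀ : M →ₗ[Λ] N, tmulOne R Λ N (Localization S) ∘ₗ φ₀ = s • φ := by
  set ι := tmulOne R Λ N (Localization S)
  obtain ⟨T, hT⟩ := Module.Finite.fg_top (R := Λ) (M := M)
  obtain ⟨s, hs⟩ := IsLocalizedModule.exist_integer_multiples S (ι.restrictScalars R) T φ
  have hrange : LinearMap.range ((s : R) • φ) ≤ LinearMap.range ι := by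
    rw [LinearMap.range_eq_map, ← hT, Submodule.map_span_le]
    exact hs
  refine ⟨s, s.2, (LinearEquiv.ofInjective ι (tmulOne_injective hS)).symm.toLinearMap ∘ₗ
    Submodule.inclusion hrange ∘ₗ ((s : R) • φ).rangeRestrict, ?_⟩
  ext m
  exact LinearEquiv.ofInjective_symm_apply (h := tmulOne_injective hS) ι _

lemma exists_comp_eq_smul_id_of_comp_eq_id [Module R M] [IsScalarTower R Λ M]
    [Module.Finite Λ M] [Module.Finite Λ N]
    [NoZeroSMulDivisors R M] [NoZeroSMulDivisors R N] (hS : (0 : R) ∉ S)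
    {f : M ⊗[R] Localization S →ₗ[Λ] N ⊗[R] Localization S}
    {g : N ⊗[R] Localization S →ₗ[Λ] M ⊗[R] Localization S} (hgf : g ∘ₗ f = LinearMap.id) :
    ∃ s ∈ S, ∃ (f₀ : M →ₗ[Λ] N) (g₀ : N →ₗ[Λ] M), g₀ ∘ₗ f₀ = s • LinearMap.id := by
  set ιM := tmulOne R Λ M (Localization S)
  set ιN := tmulOne R Λ N (Localization S)
  obtain ⟨s, hs, f₀, hf₀⟩ := exists_tmulOne_comp_eq_smul hS (f ∘ₗ ιM)
  obtain ⟨t, ht, g₀, hg₀⟩ := exists_tmulOne_comp_eq_smul hS (g ∘ₗ ιN)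
  refine ⟨t * s, S.mul_mem ht hs, f₀, g₀, (LinearMap.cancel_left (tmulOne_injective hS)).1 ?_⟩
  calc ιM ∘ₗ g₀ ∘ₗ f₀ = t • g ∘ₗ ιN ∘ₗ f₀ := by rw [← LinearMap.comp_assoc, hg₀]; rfl
    _ = t • g ∘ₗ (s • f ∘ₗ ιM) := by rw [hf₀]
    _ = (t * s) • (g ∘ₗ f) ∘ₗ ιM := by rw [LinearMap.comp_smul, smul_smul]; rfl
    _ = ιM ∘ₗ ((t * s) • LinearMap.id) := by rw [hgf]; rfl

end Descent

section FactorIdeal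

variable {R : Type*} [CommRing R] {Λ : Type*} [Ring Λ] [Algebra R Λ]
  {M : Type*} [AddCommGroup M] [Module R M] [Module Λ M] [IsScalarTower R Λ M]
  {N : Type*} [AddCommGroup N] [Module Λ N]

variable (Λ M N) in
def SmulFactorsThroughPow (k : ℕ) (r : R) : Prop :=
  ∃ (f : M →ₗ[Λ] (Fin k → N)) (g : (Fin k → N) →ₗ[Λ] M), g ∘ₗ f = r • LinearMap.id

lemma smulFactorsThroughPow_zero (k : ℕ) : SmulFactorsThroughPow Λ M N k (0 : R) :=
  ⟨0, 0, by rw [zero_smul, LinearMap.zero_comp]⟩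

lemma SmulFactorsThroughPow.add {k k' : ℕ} {r r' : R} (h : SmulFactorsThroughPow Λ M N k r)
    (h' : SmulFactorsThroughPow Λ M N k' r') : SmulFactorsThroughPow Λ M N (k + k') (r + r') := by
  obtain ⟨f, g, hgf⟩ := h
  obtain ⟨f', g', hgf'⟩ := h'
  let e : ((Fin k → N) × (Fin k' → N)) ≃ₗ[Λ] (Fin (k + k') → N) :=
    (LinearEquiv.sumArrowLequivProdArrow (Fin k) (Fin k') Λ N).symm ≪≫ₗ
      LinearEquiv.funCongrLeft Λ N finSumFinEquiv.symm
  refine ⟨e.toLinearMap ∘ₗ f.prod f', g.coprod g' ∘ₗ e.symm.toLinearMap, ?_⟩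
  ext m
  simp [← LinearMap.comp_apply, hgf, hgf', add_smul]

lemma SmulFactorsThroughPow.smul {k : ℕ} {r : R} (a : R) (h : SmulFactorsThroughPow Λ M N k r) :
    SmulFactorsThroughPow Λ M N k (a * r) := by
  obtain ⟨f, g, hgf⟩ := h
  exact ⟨f, a • g, by rw [LinearMap.smul_comp, hgf, smul_smul]⟩

variable (R Λ M N) in
def smulFactorIdeal : Ideal R where
  carrier := {r | ∃ k, SmulFactorsThroughPow Λ M N k r}
  add_mem' := fun ⟨k, hk⟩ ⟨k', hk'⟩ => ⟨k + k', hk.add hk'⟩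
  zero_mem' := ⟨0, smulFactorsThroughPow_zero 0⟩
  smul_mem' := fun a _ ⟨k, hk⟩ => ⟨k, hk.smul a⟩

lemma mem_smulFactorIdeal_of_comp_eq_smul_id {r : R} {f : M →ₗ[Λ] N} {g : N →ₗ[Λ] M}
    (hgf : g ∘ₗ f = r • LinearMap.id) : r ∈ smulFactorIdeal R Λ M N :=
  ⟨1, LinearMap.pi fun _ => f, g ∘ₗ LinearMap.proj 0, by rw [← hgf]; rfl⟩

lemma exists_pos_of_mem_smulFactorIdeal {r : R} (hr : r ∈ smulFactorIdeal R Λ M N) :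
    ∃ k, 0 < k ∧ SmulFactorsThroughPow Λ M N k r := by
  obtain ⟨k, hk⟩ := hr
  exact ⟨k + 1, k.succ_pos, add_zero r ▸ hk.add (smulFactorsThroughPow_zero 1)⟩

end FactorIdeal

theorem stmt5_general (R : Type u) [CommRing R]
    (Λ : Type u) [Ring Λ] [Algebra R Λ]
    (M : Type u) [AddCommGroup M] [Module R M] [Module Λ M] [IsScalarTower R Λ M]
    [Module.Finite Λ M] [NoZeroSMulDivisors R M]
    (N : Type u) [AddCommGroup N] [Module R N] [Module Λ N] [IsScalarTower R Λ N]
    [Module.Finite Λ N] [NoZeroSMulDivisors R N]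
    (h : ∀ (𝔪 : Ideal R) (h𝔪 : 𝔪.IsMaximal),
      ∃ (f : (M ⊗[R] Localization.AtPrime 𝔪) →ₗ[Λ] (N ⊗[R] Localization.AtPrime 𝔪))
        (g : (N ⊗[R] Localization.AtPrime 𝔪) →ₗ[Λ] (M ⊗[R] Localization.AtPrime 𝔪)),
        g.comp f = LinearMap.id) :
    ∃ k : ℕ, 0 < k ∧ ∃ (f : M →ₗ[Λ] (Fin k → N)) (g : (Fin k → N) →ₗ[Λ] M),
      g.comp f = LinearMap.id := by
  have htop : smulFactorIdeal R Λ M N = ⊤ := by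
    by_contra hne
    obtain ⟨𝔪, h𝔪, hle⟩ := Ideal.exists_le_maximal _ hne
    obtain ⟨f, g, hgf⟩ := h 𝔪 h𝔪
    obtain ⟨s, hs, f₀, g₀, hgf₀⟩ :=
      exists_comp_eq_smul_id_of_comp_eq_id (S := 𝔪.primeCompl) (fun h0 => h0 𝔪.zero_mem) hgf
    exact hs (hle (mem_smulFactorIdeal_of_comp_eq_smul_id hgf₀))
  obtain ⟨k, hk, f, g, hgf⟩ :=
    exists_pos_of_mem_smulFactorIdeal ((Ideal.eq_top_iff_one _).1 htop)
  exact ⟨k, hk, f, g, by rw [hgf, one_smul]⟩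

/-- Let `R` be a commutative domain and `Λ` an `R`-algebra.  Let `M`, `N`
be finitely generated `Λ`-modules which are torsion-free as `R`-modules.  If `M_𝔪` is a
direct summand of `N_𝔪` for every maximal ideal `𝔪` of `R`, then there exists `k > 0`
such that `M` is a direct summand of `N^k`.  (A split `Λ`-linear injection between the
localized modules is the same thing as a split `Λ_𝔪`-linear injection.) -/
theorem stmt5 (R : Type u) [CommRing R] [IsDomain R]
    (Λ : Type u) [Ring Λ] [Algebra R Λ]
    (M : Type u) [AddCommGroup M] [Module R M] [Module Λ M] [IsScalarTower R Λ M]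
    [Module.Finite Λ M] [NoZeroSMulDivisors R M]
    (N : Type u) [AddCommGroup N] [Module R N] [Module Λ N] [IsScalarTower R Λ N]
    [Module.Finite Λ N] [NoZeroSMulDivisors R N]
    (h : ∀ (𝔪 : Ideal R) (h𝔪 : 𝔪.IsMaximal),
      ∃ (f : (M ⊗[R] Localization.AtPrime 𝔪) →ₗ[Λ] (N ⊗[R] Localization.AtPrime 𝔪))
        (g : (N ⊗[R] Localization.AtPrime 𝔪) →ₗ[Λ] (M ⊗[R] Localization.AtPrime 𝔪)),
        g.comp f = LinearMap.id) :
    ∃ k : ℕ, 0 < k ∧ ∃ (f : M →ₗ[Λ] (Fin k → N)) (g : (Fin k → N) →ₗ[Λ] M),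
      g.comp f = LinearMap.id :=
  stmt5_general R Λ M N h
end

section
/- Let R be a commutative integral domain of finite character with field of fractions Q, and let Λ be an associative unital R-algebra. Let M and N be finitely generated Λ-modules which are torsion-free as R-modules. If there is an isomorphism of Λ_Q-modules M_Q ≅ N_Q, then there exists a Λ-module homomorphism f : M → N such that the induced homomorphism f_𝔪 : M_𝔪 → N_𝔪 is an isomorphism for all but finitely many maximal ideals 𝔪 of R. -/
open scoped TensorProduct

universe u

/-- Let `R` be a domain of finite character with fraction field `Q` and `Λ`
an `R`-algebra.  Let `M`, `N` be finitely generated `Λ`-modules, torsion-free over `R`.  If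
`M_Q ≅ N_Q` as `Λ_Q`-modules, then there is a `Λ`-homomorphism `f : M → N` such that the
induced map `f_𝔪 : M_𝔪 → N_𝔪` is an isomorphism for all but finitely many maximal
ideals `𝔪` of `R`. -/
theorem stmt6 (R : Type u) [CommRing R] [IsDomain R]
    (hfc : ∀ r : R, r ≠ 0 → {𝔪 : MaximalSpectrum R | r ∈ 𝔪.asIdeal}.Finite)
    (Λ : Type u) [Ring Λ] [Algebra R Λ]
    (M : Type u) [AddCommGroup M] [Module R M] [Module Λ M] [IsScalarTower R Λ M]
    [Module.Finite Λ M] [NoZeroSMulDivisors R M]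
    (N : Type u) [AddCommGroup N] [Module R N] [Module Λ N] [IsScalarTower R Λ N]
    [Module.Finite Λ N] [NoZeroSMulDivisors R N]
    (hiso : Nonempty ((M ⊗[R] FractionRing R) ≃ₗ[Λ] (N ⊗[R] FractionRing R))) :
    ∃ f : M →ₗ[Λ] N,
      {𝔪 : MaximalSpectrum R | ¬ Function.Bijective
        (LinearMap.rTensor (Localization.AtPrime 𝔪.asIdeal) (f.restrictScalars R))}.Finite := by
  classical
  obtain ⟨φ⟩ := hiso
  set S := nonZeroDivisors R with hS
  set Q := FractionRing R with hQ
  -- the canonical `R`-linear localization maps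
  let jM : M →ₗ[R] M ⊗[R] Q :=
    (TensorProduct.comm R Q M).toLinearMap ∘ₗ TensorProduct.mk R Q M 1
  let jN : N →ₗ[R] N ⊗[R] Q :=
    (TensorProduct.comm R Q N).toLinearMap ∘ₗ TensorProduct.mk R Q N 1
  haveI : IsLocalizedModule S (TensorProduct.mk R Q M 1) :=
    (isLocalizedModule_iff_isBaseChange S Q _).mpr (TensorProduct.isBaseChange R M Q)
  haveI : IsLocalizedModule S (TensorProduct.mk R Q N 1) :=
    (isLocalizedModule_iff_isBaseChange S Q _).mpr (TensorProduct.isBaseChange R N Q)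
  haveI hjM : IsLocalizedModule S jM :=
    IsLocalizedModule.of_linearEquiv S (TensorProduct.mk R Q M 1) (TensorProduct.comm R Q M)
  haveI hjN : IsLocalizedModule S jN :=
    IsLocalizedModule.of_linearEquiv S (TensorProduct.mk R Q N 1) (TensorProduct.comm R Q N)
  have jM_apply : ∀ m : M, jM m = m ⊗ₜ 1 := fun m => by simp [jM]
  have jN_apply : ∀ n : N, jN n = n ⊗ₜ 1 := fun n => by simp [jN]
  -- the canonical `Λ`-linear localization maps
  let ιM : M →ₗ[Λ] M ⊗[R] Q :=
    { toFun := fun m => m ⊗ₜ 1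
      map_add' := fun x y => TensorProduct.add_tmul x y 1
      map_smul' := fun l m => by simp [TensorProduct.smul_tmul'] }
  let ιN : N →ₗ[Λ] N ⊗[R] Q :=
    { toFun := fun n => n ⊗ₜ 1
      map_add' := fun x y => TensorProduct.add_tmul x y 1
      map_smul' := fun l n => by simp [TensorProduct.smul_tmul'] }
  have ιM_eq : ∀ m : M, ιM m = jM m := fun m => (jM_apply m).symm
  have ιN_eq : ∀ n : N, ιN n = jN n := fun n => (jN_apply n).symm
  -- injectivity of the localization maps (torsion-freeness)
  have hjMinj : Function.Injective jM := by
    intro a b hab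
    obtain ⟨c, hc⟩ := IsLocalizedModule.exists_of_eq (S := S) (f := jM) hab
    have hc' : (c : R) • a = (c : R) • b := hc
    exact smul_right_injective M (nonZeroDivisors.coe_ne_zero c) hc'
  have hjNinj : Function.Injective jN := by
    intro a b hab
    obtain ⟨c, hc⟩ := IsLocalizedModule.exists_of_eq (S := S) (f := jN) hab
    have hc' : (c : R) • a = (c : R) • b := hc
    exact smul_right_injective N (nonZeroDivisors.coe_ne_zero c) hc'
  have hιNinj : Function.Injective ιN := by
    intro a b hab
    apply hjNinj
    rw [← ιN_eq, ← ιN_eq]; exact hab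
  -- clear denominators on generators of M
  have hsurjN : ∀ y : N ⊗[R] Q, ∃ p : N × S, p.2 • y = jN p.1 :=
    fun y => IsLocalizedModule.surj S jN y
  choose p hp using hsurjN
  let num : N ⊗[R] Q → N := fun y => (p y).1
  let den : N ⊗[R] Q → S := fun y => (p y).2
  have hden : ∀ y, den y • y = jN (num y) := hp
  obtain ⟨T, hT⟩ := Module.Finite.fg_top (R := Λ) (M := M)
  let r : S := ∏ t ∈ T, den (φ (ιM t))
  have key : ∀ t ∈ (T : Set M), (r : R) • φ (ιM t) ∈ LinearMap.range ιN := by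
    intro t ht
    obtain ⟨c, hc⟩ := Finset.dvd_prod_of_mem (fun t => den (φ (ιM t))) ht
    have h1 : (r : R) • φ (ιM t) = (c : R) • ((den (φ (ιM t)) : R) • φ (ιM t)) := by
      rw [← mul_smul, ← Submonoid.coe_mul, mul_comm c, ← hc]
    have h2 : (den (φ (ιM t)) : R) • φ (ιM t) = jN (num (φ (ιM t))) := by
      rw [← Submonoid.smul_def]; exact hden _
    rw [h1, h2, ← ιN_eq]
    exact Submodule.smul_of_tower_mem _ _ (LinearMap.mem_range_self ιN _)
  -- the `Λ`-linear map `m ↦ r • φ (m ⊗ 1)`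
  let σ : (N ⊗[R] Q) →ₗ[Λ] (N ⊗[R] Q) :=
    { toFun := fun x => (r : R) • x
      map_add' := fun x y => smul_add _ x y
      map_smul' := fun l x => by simpa using smul_comm ((r : S) : R) l x }
  let g : M →ₗ[Λ] N ⊗[R] Q := σ ∘ₗ (φ.toLinearMap ∘ₗ ιM)
  have hmem : ∀ m : M, g m ∈ LinearMap.range ιN := by
    have hle : (⊤ : Submodule Λ M) ≤ Submodule.comap g (LinearMap.range ιN) := by
      rw [← hT]
      exact Submodule.span_le.mpr key
    exact fun m => hle Submodule.mem_top
  -- construct `f`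
  let e := LinearEquiv.ofInjective ιN hιNinj
  let f : M →ₗ[Λ] N :=
    e.symm.toLinearMap ∘ₗ LinearMap.codRestrict (LinearMap.range ιN) g hmem
  have hfι : ∀ m : M, ιN (f m) = (r : R) • φ (ιM m) := fun m =>
    LinearEquiv.ofInjective_symm_apply (f := ιN) (h := hιNinj)
      (⟨g m, hmem m⟩ : LinearMap.range ιN)
  -- `f` is injective
  have hfinj : Function.Injective f := by
    intro a b hab
    have h2 : (r : R) • φ (ιM a) = (r : R) • φ (ιM b) := by
      rw [← hfι, ← hfι, hab]
    have h3 : φ (ιM a) = φ (ιM b) := by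
      apply IsLocalizedModule.smul_injective jN r
      simpa [Submonoid.smul_def] using h2
    have h4 : ιM a = ιM b := φ.injective h3
    apply hjMinj
    rw [← ιM_eq, ← ιM_eq]; exact h4
  -- `s • N ⊆ range f`
  have hsurjM : ∀ y : M ⊗[R] Q, ∃ p : M × S, p.2 • y = jM p.1 :=
    fun y => IsLocalizedModule.surj S jM y
  choose p' hp' using hsurjM
  let num' : M ⊗[R] Q → M := fun y => (p' y).1
  let den' : M ⊗[R] Q → S := fun y => (p' y).2
  have hden' : ∀ y, den' y • y = jM (num' y) := hp'
  obtain ⟨U, hU⟩ := Module.Finite.fg_top (R := Λ) (M := N)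
  let s : S := r * ∏ u ∈ U, den' (φ.symm (ιN u))
  have φR : ∀ (a : R) (x : M ⊗[R] Q), φ (a • x) = a • φ x := fun a x => by
    rw [← algebraMap_smul Λ a x, map_smul, algebraMap_smul]
  have hsU : ∀ u ∈ (U : Set N), (s : R) • u ∈ LinearMap.range f := by
    intro u hu
    obtain ⟨c, hc⟩ := Finset.dvd_prod_of_mem (fun u => den' (φ.symm (ιN u))) hu
    have h5 : ((den' (φ.symm (ιN u)) : S) : R) • ιN u = φ (jM (num' (φ.symm (ιN u)))) := by
      have h6 := hden' (φ.symm (ιN u))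
      rw [Submonoid.smul_def] at h6
      calc ((den' (φ.symm (ιN u)) : S) : R) • ιN u
          = φ (((den' (φ.symm (ιN u)) : S) : R) • φ.symm (ιN u)) := by
            rw [φR, φ.apply_symm_apply]
        _ = φ (jM (num' (φ.symm (ιN u)))) := by rw [h6]
    have h7 : ιN (((r * den' (φ.symm (ιN u)) : S) : R) • u)
        = ιN (f (num' (φ.symm (ιN u)))) := by
      rw [hfι, ιN_eq, map_smul, ← ιN_eq, Submonoid.coe_mul, mul_smul, h5, ιM_eq]
    have h8 : ((r * den' (φ.symm (ιN u)) : S) : R) • u = f (num' (φ.symm (ιN u))) := hιNinj h7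
    have hs' : s = c * (r * den' (φ.symm (ιN u))) := by
      show r * ∏ u ∈ U, den' (φ.symm (ιN u)) = _
      rw [hc, mul_comm (den' (φ.symm (ιN u))) c, ← mul_assoc, mul_comm r c, mul_assoc]
    have h9 : (s : R) • u = (c : R) • (((r * den' (φ.symm (ιN u)) : S) : R) • u) := by
      rw [← mul_smul, ← Submonoid.coe_mul, ← hs']
    rw [h9, h8]
    exact Submodule.smul_of_tower_mem _ _ (LinearMap.mem_range_self f _)
  let σN : N →ₗ[Λ] N :=
    { toFun := fun x => (s : R) • x
      map_add' := fun x y => smul_add _ x y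
      map_smul' := fun l x => by simpa using smul_comm ((s : S) : R) l x }
  have hsN : ∀ n : N, (s : R) • n ∈ LinearMap.range f := by
    have hle : (⊤ : Submodule Λ N) ≤ Submodule.comap σN (LinearMap.range f) := by
      rw [← hU]
      exact Submodule.span_le.mpr hsU
    exact fun n => hle Submodule.mem_top
  -- conclusion
  refine ⟨f, Set.Finite.subset (hfc (s : R) (nonZeroDivisors.coe_ne_zero s)) ?_⟩
  intro 𝔪 h𝔪
  by_contra hs𝔪
  apply h𝔪
  constructor
  · exact Module.Flat.rTensor_preserves_injective_linearMap (f.restrictScalars R)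
      (fun a b hab => hfinj hab)
  · intro x
    induction x using TensorProduct.induction_on with
    | zero => exact ⟨0, map_zero _⟩
    | tmul n q =>
      obtain ⟨m, hm⟩ := hsN n
      have hu : IsUnit (algebraMap R (Localization.AtPrime 𝔪.asIdeal) (s : R)) :=
        IsLocalization.map_units _ (⟨(s : R), hs𝔪⟩ : 𝔪.asIdeal.primeCompl)
      refine ⟨m ⊗ₜ (↑hu.unit⁻¹ * q), ?_⟩
      rw [LinearMap.rTensor_tmul]
      have hfm : (f.restrictScalars R) m = (s : R) • n := hm
      rw [hfm, TensorProduct.smul_tmul]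
      congr 1
      rw [Algebra.smul_def, ← mul_assoc, hu.mul_val_inv, one_mul]
    | add x y hx hy =>
      obtain ⟨a, ha⟩ := hx
      obtain ⟨b, hb⟩ := hy
      exact ⟨a + b, by rw [map_add, ha, hb]⟩
end

section
/- Let R be a commutative integral domain of finite character and let M be a finitely generated torsion-free R-module. Then M_𝔪 is a free R_𝔪-module for all but finitely many maximal ideals 𝔪 of R. -/
/-!
A maximal linearly independent subfamily of a finite generating family of `M` spans a free
submodule `F` with `r • M ⊆ F` for some `r ≠ 0`. At every maximal ideal avoiding `r`, the
element `r` becomes a unit, so `F_𝔪 → M_𝔪` is an isomorphism and `M_𝔪` is free; by finite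
character only finitely many maximal ideals contain `r`.
-/

universe u

theorem Module.Finite.exists_free_submodule_smul_mem (R M : Type*) [CommRing R] [IsDomain R]
    [AddCommGroup M] [Module R M] [Module.Finite R M] :
    ∃ r : R, r ≠ 0 ∧ ∃ F : Submodule R M, Module.Free R F ∧ ∀ m : M, r • m ∈ F := by
  classical
  obtain ⟨n, v, hv⟩ := Module.Finite.exists_fin (R := R) (M := M)
  obtain ⟨I, hI, hmax⟩ := exists_maximal_linearIndepOn R v
  have hFfree : Module.Free R (Submodule.span R (v '' I)) := by
    rw [Set.image_eq_range]
    exact Module.Free.of_basis (Module.Basis.span hI)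
  set F := Submodule.span R (v '' I)
  have hsmul_mem : ∀ i, ∃ a : R, a ≠ 0 ∧ a • v i ∈ F := by
    intro i
    by_cases hi : i ∈ I
    · exact ⟨1, one_ne_zero, by simpa using Submodule.subset_span (Set.mem_image_of_mem v hi)⟩
    · exact hmax i hi
  choose a ha haF using hsmul_mem
  refine ⟨∏ i, a i, Finset.prod_ne_zero_iff.mpr fun i _ => ha i, F, hFfree, fun m => ?_⟩
  have hspan : Submodule.span R (Set.range v) ≤ F.comap (LinearMap.lsmul R M (∏ i, a i)) := by
    rw [Submodule.span_le]
    rintro _ ⟨i, rfl⟩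
    rw [SetLike.mem_coe, Submodule.mem_comap, LinearMap.lsmul_apply,
      ← Finset.prod_erase_mul _ _ (Finset.mem_univ i), mul_smul]
    exact F.smul_mem _ (haF i)
  exact hspan (hv ▸ Submodule.mem_top)

theorem IsLocalizedModule.comp_subtype_of_smul_mem {R M M' : Type*} [CommSemiring R]
    [AddCommMonoid M] [Module R M] [AddCommMonoid M'] [Module R M'] (S : Submonoid R)
    (f : M →ₗ[R] M') [IsLocalizedModule S f] {F : Submodule R M} {s : R} (hs : s ∈ S)
    (hsF : ∀ m : M, s • m ∈ F) : IsLocalizedModule S (f ∘ₗ F.subtype) where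
  map_units := IsLocalizedModule.map_units f
  surj y := by
    obtain ⟨⟨m, t⟩, hy⟩ := IsLocalizedModule.surj S f y
    refine ⟨⟨⟨s • m, hsF m⟩, ⟨s, hs⟩ * t⟩, ?_⟩
    simp only [LinearMap.comp_apply, Submodule.subtype_apply, map_smul, ← hy, mul_smul,
      Submonoid.smul_def]
  exists_of_eq {x₁ x₂} h := by
    obtain ⟨c, hc⟩ := IsLocalizedModule.exists_of_eq (S := S) (f := f) h
    exact ⟨c, Subtype.ext hc⟩

theorem Module.free_localizedModule_of_smul_mem {R M : Type*} [CommRing R] [AddCommGroup M]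
    [Module R M] (S : Submonoid R) {F : Submodule R M} [Module.Free R F] {s : R} (hs : s ∈ S)
    (hsF : ∀ m : M, s • m ∈ F) : Module.Free (Localization S) (LocalizedModule S M) :=
  have := IsLocalizedModule.comp_subtype_of_smul_mem S (LocalizedModule.mkLinearMap S M) hs hsF
  Module.free_of_isLocalizedModule S (LocalizedModule.mkLinearMap S M ∘ₗ F.subtype)

theorem stmt9_general (R : Type u) [CommRing R] [IsDomain R]
    (hfc : ∀ r : R, r ≠ 0 → {𝔪 : MaximalSpectrum R | r ∈ 𝔪.asIdeal}.Finite)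
    (M : Type u) [AddCommGroup M] [Module R M] [Module.Finite R M] :
    {𝔪 : MaximalSpectrum R | ¬ Module.Free (Localization.AtPrime 𝔪.asIdeal)
      (LocalizedModule 𝔪.asIdeal.primeCompl M)}.Finite := by
  obtain ⟨r, hr, F, hF, hrF⟩ := Module.Finite.exists_free_submodule_smul_mem R M
  refine (hfc r hr).subset fun 𝔪 hnotFree => ?_
  by_contra hr𝔪
  exact hnotFree (Module.free_localizedModule_of_smul_mem _ (s := r) hr𝔪 hrF)

/-- Let `R` be a commutative domain of finite character and `M` a finitely
generated torsion-free `R`-module.  Then `M_𝔪` is a free `R_𝔪`-module for all but finitely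
many maximal ideals `𝔪` of `R`. -/
theorem stmt9 (R : Type u) [CommRing R] [IsDomain R]
    (hfc : ∀ r : R, r ≠ 0 → {𝔪 : MaximalSpectrum R | r ∈ 𝔪.asIdeal}.Finite)
    (M : Type u) [AddCommGroup M] [Module R M] [Module.Finite R M] [NoZeroSMulDivisors R M] :
    {𝔪 : MaximalSpectrum R | ¬ Module.Free (Localization.AtPrime 𝔪.asIdeal)
      (LocalizedModule 𝔪.asIdeal.primeCompl M)}.Finite :=
  stmt9_general R hfc M
end

section
/- Let R be an h-local domain and let Λ be an associative unital R-algebra. Let M be a Λ-module that is torsion as an R-module (every element of M is annihilated by some nonzero element of R). Then the canonical Λ-linear map from M to the product of all localizations M_𝔪 over the maximal ideals 𝔪 of R, given componentwise by the localization maps, takes values in the direct sum ⊕_𝔪 M_𝔪 and induces a Λ-module isomorphism M ≅ ⊕_{𝔪 maximal} M_𝔪. -/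
open scoped TensorProduct DirectSum

universe u

/-!
Since `M` is torsion and `R` has finite character, each `m ∈ M` has nonzero localization at
only finitely many maximal ideals, so the localization maps assemble into a map to the direct
sum; it is injective because an element vanishing at every maximal ideal is zero.
For surjectivity, h-locality says that two distinct maximal ideals contain no common nonzero
prime, so for `r ≠ 0` the multiplicative set `(R ∖ 𝔪)(R ∖ 𝔫)` meets `rR`. Multiplying `m`
(with `r • m = 0`) by a product of such factors gives an element supported at `𝔪` alone, and
every `u ∉ 𝔪` acts invertibly on the elements supported at `𝔪`, so every `m / s ∈ M_𝔪`
lifts to an element of `M` that vanishes at all other maximal ideals.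
-/

namespace DirectSum

variable {A M ι : Type*} {N : ι → Type*} [Semiring A] [AddCommMonoid M] [Module A M]
  [∀ i, AddCommMonoid (N i)] [∀ i, Module A (N i)]

noncomputable def linearMapOfFiniteSupport (φ : ∀ i, M →ₗ[A] N i)
    (hφ : ∀ m, {i | φ i m ≠ 0}.Finite) : M →ₗ[A] ⨁ i, N i where
  toFun m := ⟨fun i => φ i m, Trunc.mk ⟨(hφ m).toFinset.val, fun i => by
    simp [or_iff_not_imp_left]⟩⟩
  map_add' _ _ := DFinsupp.ext fun i => map_add (φ i) _ _
  map_smul' _ _ := DFinsupp.ext fun i => map_smul (φ i) _ _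

@[simp]
theorem linearMapOfFiniteSupport_apply (φ : ∀ i, M →ₗ[A] N i)
    (hφ : ∀ m, {i | φ i m ≠ 0}.Finite) (m : M) (i : ι) :
    linearMapOfFiniteSupport φ hφ m i = φ i m :=
  rfl

theorem linearMapOfFiniteSupport_surjective (φ : ∀ i, M →ₗ[A] N i)
    (hφ : ∀ m, {i | φ i m ≠ 0}.Finite)
    (h : ∀ i (y : N i), ∃ x, φ i x = y ∧ ∀ j ≠ i, φ j x = 0) :
    Function.Surjective (linearMapOfFiniteSupport φ hφ) := by
  classical
  intro z
  induction z using DirectSum.induction_on with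
  | zero => exact ⟨0, map_zero _⟩
  | of i y =>
    obtain ⟨x, hxi, hxj⟩ := h i y
    refine ⟨x, DFinsupp.ext fun j => ?_⟩
    obtain rfl | hji := eq_or_ne j i
    · simpa using hxi
    · rw [linearMapOfFiniteSupport_apply, hxj j hji, of_eq_of_ne _ _ _ hji]
  | add z z' hz hz' =>
    obtain ⟨⟨x, rfl⟩, ⟨x', rfl⟩⟩ := And.intro hz hz'
    exact ⟨x + x', map_add _ _ _⟩

end DirectSum

namespace TensorProduct

variable {R Λ M L : Type*} [CommRing R] [Ring Λ] [Algebra R Λ] [AddCommGroup M] [Module R M]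
  [Module Λ M] [IsScalarTower R Λ M] [CommRing L] [Algebra R L]

instance isLocalizedModule_flip_mk_one (S : Submonoid R) [IsLocalization S L] :
    IsLocalizedModule S (((AlgebraTensorModule.mk R Λ M L).flip 1).restrictScalars R) := by
  have h : ((AlgebraTensorModule.mk R Λ M L).flip 1).restrictScalars R =
      (TensorProduct.comm R L M).toLinearMap ∘ₗ TensorProduct.mk R L M 1 := by
    rfl
  rw [h]
  infer_instance

end TensorProduct

namespace MaximalSpectrum

variable {R M N : Type*} [CommRing R] [AddCommGroup M] [Module R M] [AddCommGroup N] [Module R N]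

theorem exists_mul_mem_of_ne
    (hhl : ∀ p : Ideal R, p.IsPrime → p ≠ ⊥ → ∃! 𝔪 : Ideal R, 𝔪.IsMaximal ∧ p ≤ 𝔪)
    {I : Ideal R} (hI : I ≠ ⊥) {𝔪 𝔫 : MaximalSpectrum R} (hne : 𝔪 ≠ 𝔫) :
    ∃ s ∉ 𝔪.asIdeal, ∃ t ∉ 𝔫.asIdeal, s * t ∈ I := by
  by_contra! h
  set S := 𝔪.asIdeal.primeCompl ⊔ 𝔫.asIdeal.primeCompl
  have hIS : Disjoint (I : Set R) S := Set.disjoint_left.mpr fun x hxI hxS => by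
    obtain ⟨s, hs, t, ht, rfl⟩ := Submonoid.mem_sup.mp hxS
    exact h s hs t ht hxI
  obtain ⟨p, hp, hIp, hpS⟩ := Ideal.exists_le_prime_disjoint I S hIS
  have hp_le (𝔮 : MaximalSpectrum R) (h𝔮 : 𝔮.asIdeal.primeCompl ≤ S) : p ≤ 𝔮.asIdeal :=
    fun x hxp => by_contra fun hx𝔮 => Set.disjoint_left.mp hpS hxp (h𝔮 hx𝔮)
  obtain ⟨q, -, hq⟩ := hhl p hp (ne_bot_of_le_ne_bot hI hIp)
  exact hne <| MaximalSpectrum.ext <|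
    (hq _ ⟨𝔪.isMaximal, hp_le 𝔪 le_sup_left⟩).trans
      (hq _ ⟨𝔫.isMaximal, hp_le 𝔫 le_sup_right⟩).symm

theorem exists_notMem_forall_dvd_mul
    (hfc : ∀ r : R, r ≠ 0 → {𝔪 : MaximalSpectrum R | r ∈ 𝔪.asIdeal}.Finite)
    (hhl : ∀ p : Ideal R, p.IsPrime → p ≠ ⊥ → ∃! 𝔪 : Ideal R, 𝔪.IsMaximal ∧ p ≤ 𝔪)
    {r : R} (hr : r ≠ 0) (𝔪 : MaximalSpectrum R) :
    ∃ a ∉ 𝔪.asIdeal, ∀ 𝔫 ≠ 𝔪, ∃ t ∉ 𝔫.asIdeal, r ∣ t * a := by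
  have hpair (𝔫 : MaximalSpectrum R) :
      ∃ s ∉ 𝔪.asIdeal, ∃ t, 𝔫 ≠ 𝔪 → t ∉ 𝔫.asIdeal ∧ r ∣ s * t := by
    by_cases h : 𝔫 = 𝔪
    · exact ⟨1, 𝔪.asIdeal.primeCompl.one_mem, 1, fun h' => (h' h).elim⟩
    · obtain ⟨s, hs, t, ht, hst⟩ :=
        exists_mul_mem_of_ne hhl (I := Ideal.span {r}) (by simpa using hr) (Ne.symm h)
      exact ⟨s, hs, t, fun _ => ⟨ht, Ideal.mem_span_singleton.mp hst⟩⟩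
  choose s hs t ht using hpair
  refine ⟨∏ 𝔫 ∈ (hfc r hr).toFinset, s 𝔫,
    Submonoid.prod_mem 𝔪.asIdeal.primeCompl fun 𝔫 _ => hs 𝔫, fun 𝔫 hne => ?_⟩
  by_cases hr𝔫 : r ∈ 𝔫.asIdeal
  · refine ⟨t 𝔫, (ht 𝔫 hne).1, (ht 𝔫 hne).2.trans ?_⟩
    rw [mul_comm]
    exact mul_dvd_mul_left _ (Finset.dvd_prod_of_mem s (by simpa using hr𝔫))
  · exact ⟨r, hr𝔫, dvd_mul_right r _⟩

theorem exists_mul_smul_eq_self {𝔪 : MaximalSpectrum R} {x : M}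
    (hx : ∀ 𝔫 ≠ 𝔪, ∃ t ∉ 𝔫.asIdeal, t • x = 0) {u : R} (hu : u ∉ 𝔪.asIdeal) :
    ∃ c : R, (c * u) • x = x := by
  have htop : Ideal.span {u} ⊔ (R ∙ x).annihilator = ⊤ := by
    by_contra h
    obtain ⟨𝔫, h𝔫, hle⟩ := Ideal.exists_le_maximal _ h
    have hu𝔫 : u ∈ 𝔫 := hle (Ideal.mem_sup_left (Ideal.mem_span_singleton_self u))
    obtain ⟨t, ht, htx⟩ := hx ⟨𝔫, h𝔫⟩ fun e => hu (e ▸ hu𝔫)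
    exact ht (hle (Ideal.mem_sup_right ((Submodule.mem_annihilator_span_singleton x t).mpr htx)))
  obtain ⟨c, j, hj, hcj⟩ := Ideal.mem_span_singleton_sup.mp (htop ▸ Submodule.mem_top (x := 1))
  refine ⟨c, ?_⟩
  rw [eq_sub_of_add_eq hcj, sub_smul, one_smul,
    (Submodule.mem_annihilator_span_singleton x j).mp hj, sub_zero]

theorem exists_eq_and_forall_ne_exists_smul_eq_zero
    (hfc : ∀ r : R, r ≠ 0 → {𝔪 : MaximalSpectrum R | r ∈ 𝔪.asIdeal}.Finite)
    (hhl : ∀ p : Ideal R, p.IsPrime → p ≠ ⊥ → ∃! 𝔪 : Ideal R, 𝔪.IsMaximal ∧ p ≤ 𝔪)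
    (htor : ∀ m : M, ∃ r : R, r ≠ 0 ∧ r • m = 0) {𝔪 : MaximalSpectrum R}
    (g : M →ₗ[R] N) [IsLocalizedModule 𝔪.asIdeal.primeCompl g] (y : N) :
    ∃ x : M, g x = y ∧ ∀ 𝔫 ≠ 𝔪, ∃ t ∉ 𝔫.asIdeal, t • x = 0 := by
  obtain ⟨⟨m, s⟩, hy⟩ := IsLocalizedModule.surj 𝔪.asIdeal.primeCompl g y
  obtain ⟨r, hr, hrm⟩ := htor m
  obtain ⟨a, ha, hdvd⟩ := exists_notMem_forall_dvd_mul hfc hhl hr 𝔪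
  have hsupp (b : R) : ∀ 𝔫 ≠ 𝔪, ∃ t ∉ 𝔫.asIdeal, t • (b • a • m) = 0 := fun 𝔫 hne => by
    obtain ⟨t, ht, c, hc⟩ := hdvd 𝔫 hne
    refine ⟨t, ht, ?_⟩
    rw [smul_comm, smul_smul t, hc, mul_comm r, mul_smul, hrm, smul_zero, smul_zero]
  let u : 𝔪.asIdeal.primeCompl := ⟨a, ha⟩ * s
  obtain ⟨c, hc⟩ := exists_mul_smul_eq_self (by simpa using hsupp 1) u.2
  refine ⟨c • a • m, ?_, hsupp c⟩
  rw [← IsLocalizedModule.smul_inj g u, Submonoid.smul_def, ← map_smul, smul_smul,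
    mul_comm _ c, hc, map_smul, ← hy]
  simp only [u, Submonoid.smul_def, mul_smul]

end MaximalSpectrum

theorem stmt10_general (R : Type u) [CommRing R]
    (hfc : ∀ r : R, r ≠ 0 → {𝔪 : MaximalSpectrum R | r ∈ 𝔪.asIdeal}.Finite)
    (hhl : ∀ p : Ideal R, p.IsPrime → p ≠ ⊥ → ∃! 𝔪 : Ideal R, 𝔪.IsMaximal ∧ p ≤ 𝔪)
    (Λ : Type u) [Ring Λ] [Algebra R Λ]
    (M : Type u) [AddCommGroup M] [Module R M] [Module Λ M] [IsScalarTower R Λ M]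
    (htor : ∀ m : M, ∃ r : R, r ≠ 0 ∧ r • m = 0) :
    ∃ e : M ≃ₗ[Λ] (⨁ 𝔪 : MaximalSpectrum R, M ⊗[R] Localization.AtPrime 𝔪.asIdeal),
      ∀ (m : M) (𝔪 : MaximalSpectrum R), e m 𝔪 = m ⊗ₜ[R] 1 := by
  let φ (𝔪 : MaximalSpectrum R) : M →ₗ[Λ] M ⊗[R] Localization.AtPrime 𝔪.asIdeal :=
    (TensorProduct.AlgebraTensorModule.mk R Λ M _).flip 1
  have hφ_eq_zero {𝔪 : MaximalSpectrum R} {m : M} :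
      φ 𝔪 m = 0 ↔ ∃ t ∉ 𝔪.asIdeal, t • m = 0 :=
    (IsLocalizedModule.eq_zero_iff 𝔪.asIdeal.primeCompl ((φ 𝔪).restrictScalars R)).trans
      ⟨fun ⟨t, ht⟩ => ⟨t, t.2, ht⟩, fun ⟨t, ht, htm⟩ => ⟨⟨t, ht⟩, htm⟩⟩
  have hfin (m : M) : {𝔪 | φ 𝔪 m ≠ 0}.Finite := by
    obtain ⟨r, hr, hrm⟩ := htor m
    exact (hfc r hr).subset fun 𝔪 h => by_contra fun hr𝔪 => h (hφ_eq_zero.mpr ⟨r, hr𝔪, hrm⟩)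
  let f := DirectSum.linearMapOfFiniteSupport φ hfin
  have hinj : Function.Injective f := (injective_iff_map_eq_zero f).mpr fun m hm =>
    Module.eq_zero_of_localization_maximal _ (fun P hP => (φ ⟨P, hP⟩).restrictScalars R) m
      fun P hP => congr($hm ⟨P, hP⟩)
  have hsurj : Function.Surjective f := by
    refine DirectSum.linearMapOfFiniteSupport_surjective φ hfin fun 𝔪 y => ?_
    obtain ⟨x, hxy, hx⟩ := MaximalSpectrum.exists_eq_and_forall_ne_exists_smul_eq_zero
      (𝔪 := 𝔪) hfc hhl htor ((φ 𝔪).restrictScalars R) y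
    exact ⟨x, hxy, fun 𝔫 hne => hφ_eq_zero.mpr (hx 𝔫 hne)⟩
  exact ⟨.ofBijective f ⟨hinj, hsurj⟩, fun _ _ => rfl⟩

/-- Let `R` be an `h`-local domain (finite character, and every nonzero
prime ideal is contained in a unique maximal ideal) and `Λ` an `R`-algebra.  Let `M` be a
`Λ`-module which is torsion as an `R`-module.  Then the canonical map, given componentwise
by the localization maps `m ↦ m ⊗ 1`, induces a `Λ`-module isomorphism
`M ≅ ⊕_{𝔪 maximal} M_𝔪`. -/
theorem stmt10 (R : Type u) [CommRing R] [IsDomain R]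
    (hfc : ∀ r : R, r ≠ 0 → {𝔪 : MaximalSpectrum R | r ∈ 𝔪.asIdeal}.Finite)
    (hhl : ∀ p : Ideal R, p.IsPrime → p ≠ ⊥ → ∃! 𝔪 : Ideal R, 𝔪.IsMaximal ∧ p ≤ 𝔪)
    (Λ : Type u) [Ring Λ] [Algebra R Λ]
    (M : Type u) [AddCommGroup M] [Module R M] [Module Λ M] [IsScalarTower R Λ M]
    (htor : ∀ m : M, ∃ r : R, r ≠ 0 ∧ r • m = 0) :
    ∃ e : M ≃ₗ[Λ] (⨁ 𝔪 : MaximalSpectrum R, M ⊗[R] Localization.AtPrime 𝔪.asIdeal),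
      ∀ (m : M) (𝔪 : MaximalSpectrum R), e m 𝔪 = m ⊗ₜ[R] 1 :=
  stmt10_general R hfc hhl Λ M htor
end

section
/- Let R be a commutative local integral domain of Krull dimension 1 with field of fractions Q. Then every finitely generated torsion-free R-module of rank one has local endomorphism ring if and only if the integral closure of R in Q is a local ring. -/
/-!
If `M` is torsion-free of rank one, then `K ⊗ M ≅ K` for the fraction field `K`, so every
endomorphism of `M` acts on `K ⊗ M` by a scalar. This embeds `End_R(M)` into `K` as a ring
between `R` and its integral closure `R̄` (integral because it stabilises the finitely
generated module `M`). As `R̄` is integral over this ring, the inclusion reflects units, so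
`End_R(M)` is local as soon as `R̄` is. Conversely, for `x ∈ R̄` the ring `R[x]` is such a
module, and multiplication by `a ∈ R[x]` is invertible only if `a` is a unit; so locality of
`End_R(R[x])` makes `x` or `1 - x` a unit.
-/

open Module nonZeroDivisors

section LocalRing

variable {R : Type*} [CommRing R]

theorem isUnit_of_isUnit_lmul {A : Type*} [CommRing A] [Algebra R A] {a : A}
    (h : IsUnit (Algebra.lmul R A a)) : IsUnit a := by
  obtain ⟨ψ, hψ⟩ := h.exists_right_inv
  exact .of_mul_eq_one (ψ 1) (by simpa using congr($hψ 1))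

instance isLocalHom_lmul (A : Type*) [CommRing A] [Algebra R A] :
    IsLocalHom (Algebra.lmul R A) :=
  ⟨fun _ => isUnit_of_isUnit_lmul⟩

theorem IsLocalRing.of_isLocalRing_end (A : Type*) [CommRing A] [Algebra R A]
    [IsLocalRing (Module.End R A)] : IsLocalRing A :=
  (Algebra.lmul R A : A →+* Module.End R A).domain_isLocalRing

theorem Subalgebra.isLocalRing_of_le_integralClosure {S : Type*} [CommRing S] [Algebra R S]
    [IsLocalRing (integralClosure R S)] {A : Subalgebra R S} (hA : A ≤ integralClosure R S) :
    IsLocalRing A :=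
  have hint : (Subalgebra.inclusion hA).toRingHom.IsIntegral :=
    .tower_top (algebraMap R A) _ (algebraMap_isIntegral_iff.mpr inferInstance)
  have := hint.isLocalHom (Subalgebra.inclusion_injective hA)
  (Subalgebra.inclusion hA).toRingHom.domain_isLocalRing

theorem isLocalRing_integralClosure_of_isLocalRing_end {S : Type*} [CommRing S] [Nontrivial S]
    [Algebra R S]
    (H : ∀ x ∈ integralClosure R S, IsLocalRing (Module.End R (Algebra.adjoin R {x}))) :
    IsLocalRing (integralClosure R S) := by
  refine IsLocalRing.of_isUnit_or_isUnit_one_sub_self fun x => ?_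
  have hx : Algebra.adjoin R {(x : S)} ≤ integralClosure R S := adjoin_le_integralClosure x.2
  have := H x x.2
  have := IsLocalRing.of_isLocalRing_end (R := R) (Algebra.adjoin R {(x : S)})
  exact (IsLocalRing.isUnit_or_isUnit_one_sub_self
    (⟨x, Algebra.self_mem_adjoin_singleton R _⟩ : Algebra.adjoin R {(x : S)})).imp
    (·.map (Subalgebra.inclusion hx)) (·.map (Subalgebra.inclusion hx))

end LocalRing

namespace IsLocalizedModule

variable {R K M : Type*} [CommRing R] [CommRing K] [Algebra R K] (S : Submonoid R)
  [IsLocalization S K] [AddCommGroup M] [Module R M] (f : M →ₗ[R] K) [IsLocalizedModule S f]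

theorem map_apply_eq_mul_map_one (φ : Module.End R M) (x : K) :
    map S f f φ x = x * map S f f φ 1 := by
  have := IsLocalization.linearMap_compatibleSMul S K K K
  simpa using (map S f f φ).map_smul_of_tower x 1

/-- The scalar by which an endomorphism of `M` acts on its localization `K`. -/
noncomputable def endScalar : Module.End R M →ₐ[R] K :=
  AlgHom.ofLinearMap (LinearMap.applyₗ 1 ∘ₗ map S f f)
    (by simp [Module.End.one_eq_id, map_id])
    (fun φ ψ => by
      change map S f f (φ ∘ₗ ψ) 1 = map S f f φ 1 * map S f f ψ 1
      rw [map_comp' S f f f, LinearMap.comp_apply, map_apply_eq_mul_map_one S f φ, mul_comm])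

theorem apply_eq_endScalar_mul (φ : Module.End R M) (m : M) :
    f (φ m) = endScalar S f φ * f m := by
  rw [← map_apply S f f φ, map_apply_eq_mul_map_one, mul_comm]
  rfl

theorem endScalar_injective (hf : Function.Injective f) : Function.Injective (endScalar S f) :=
  fun φ ψ h => LinearMap.ext fun m => hf <| by
    rw [apply_eq_endScalar_mul S f, apply_eq_endScalar_mul S f, h]

theorem isIntegral_endScalar [IsDomain K] [Module.Finite R M] (φ : Module.End R M) :
    IsIntegral R (endScalar S f φ) := by
  have hf : LinearMap.range f ≠ ⊥ := by
    intro h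
    obtain ⟨⟨m, s⟩, hs⟩ := surj S f 1
    rw [LinearMap.range_eq_bot.mp h, LinearMap.zero_apply, Submonoid.smul_def, Algebra.smul_def,
      mul_one] at hs
    exact (IsLocalization.map_units K s).ne_zero hs
  have hfg : (LinearMap.range f).FG := LinearMap.range_eq_map f ▸ Module.Finite.fg_top.map f
  refine isIntegral_of_smul_mem_submodule _ hf hfg _ ?_
  rintro _ ⟨m, rfl⟩
  exact ⟨φ m, apply_eq_endScalar_mul S f φ m⟩

theorem injective_of_isTorsionFree {R M M' : Type*} [CommRing R] [AddCommGroup M] [Module R M]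
    [AddCommGroup M'] [Module R M'] [IsTorsionFree R M] (f : M →ₗ[R] M')
    [IsLocalizedModule R⁰ f] : Function.Injective f :=
  (injective_iff_isRegular R⁰ f).mpr fun c =>
    IsTorsionFree.isSMulRegular (le_nonZeroDivisors_iff_isRegular.mp le_rfl c)

end IsLocalizedModule

theorem rank_fractionRing_localizedModule {R : Type u} [CommRing R] (M : Type u) [AddCommGroup M]
    [Module R M] : Module.rank (FractionRing R) (LocalizedModule R⁰ M) = Module.rank R M :=
  (IsFractionRing.rank_right_eq R (FractionRing R) (LocalizedModule R⁰ M)).trans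
    (IsLocalizedModule.rank_eq R⁰ le_rfl (LocalizedModule.mkLinearMap R⁰ M))

section Domain

variable {R : Type*} [CommRing R] [IsDomain R]

theorem Submodule.rank_eq_one_of_ne_bot {K : Type*} [Field K] [Algebra R K] [IsFractionRing R K]
    {N : Submodule R K} (hN : N ≠ ⊥) : Module.rank R N = 1 := by
  have : Nontrivial N := Submodule.nontrivial_iff_ne_bot.mpr hN
  refine le_antisymm ?_ (Cardinal.one_le_iff_pos.mpr rank_pos)
  calc Module.rank R N ≤ Module.rank R K := N.rank_le
    _ = 1 := (IsFractionRing.rank_right_eq R K K).symm.trans (rank_self K)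

theorem exists_isLocalizedModule_fractionRing {M : Type*} [AddCommGroup M] [Module R M]
    (h : Module.rank (FractionRing R) (LocalizedModule R⁰ M) = 1) :
    ∃ f : M →ₗ[R] FractionRing R, IsLocalizedModule R⁰ f := by
  have := Module.finite_of_rank_eq_one h
  let e := LinearEquiv.ofFinrankEq (R := FractionRing R) (LocalizedModule R⁰ M) (FractionRing R)
    (by rw [Module.finrank_eq_of_rank_eq h, Module.finrank_self])
  exact ⟨e.restrictScalars R ∘ₗ LocalizedModule.mkLinearMap R⁰ M, inferInstance⟩

theorem isLocalRing_end_of_rank_eq_one [IsLocalRing (integralClosure R (FractionRing R))]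
    {M : Type*} [AddCommGroup M] [Module R M] [Module.Finite R M] [IsTorsionFree R M]
    (h : Module.rank (FractionRing R) (LocalizedModule R⁰ M) = 1) :
    IsLocalRing (Module.End R M) := by
  obtain ⟨f, _⟩ := exists_isLocalizedModule_fractionRing h
  let g := IsLocalizedModule.endScalar R⁰ f
  have hg : g.range ≤ integralClosure R (FractionRing R) := by
    rintro _ ⟨φ, rfl⟩
    exact IsLocalizedModule.isIntegral_endScalar R⁰ f φ
  have := Subalgebra.isLocalRing_of_le_integralClosure hg
  exact (AlgEquiv.ofInjective g (IsLocalizedModule.endScalar_injective R⁰ f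
    (IsLocalizedModule.injective_of_isTorsionFree f))).symm.toRingEquiv.isLocalRing

end Domain

theorem stmt16_general (R : Type u) [CommRing R] [IsDomain R] :
    (∀ (M : Type u) (_ : AddCommGroup M) (_ : Module R M)
        (_ : Module.Finite R M) (_ : NoZeroSMulDivisors R M),
      Module.rank (FractionRing R) (LocalizedModule (nonZeroDivisors R) M) = 1 →
      IsLocalRing (Module.End R M)) ↔
    IsLocalRing (integralClosure R (FractionRing R)) := by
  refine ⟨fun H => isLocalRing_integralClosure_of_isLocalRing_end fun x hx => ?_,
    fun _ M _ _ _ _ h => isLocalRing_end_of_rank_eq_one h⟩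
  set A := Algebra.adjoin R {x}
  have hA : NoZeroSMulDivisors R A :=
    ⟨fun h => Module.isTorsionFree_iff_smul_eq_zero.mp inferInstance _ _ h⟩
  refine H A _ _ (Algebra.finite_adjoin_simple_of_isIntegral hx) hA ?_
  rw [rank_fractionRing_localizedModule]
  exact Submodule.rank_eq_one_of_ne_bot (N := Subalgebra.toSubmodule A)
    (Submodule.ne_bot_iff _ |>.mpr ⟨1, A.one_mem, one_ne_zero⟩)

/-- Let `R` be a commutative local domain of Krull dimension 1 with
fraction field `Q`.  Then every finitely generated torsion-free `R`-module of rank one has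
local endomorphism ring if and only if the integral closure of `R` in `Q` is a local
ring. -/
theorem stmt16 (R : Type u) [CommRing R] [IsDomain R] [IsLocalRing R]
    (hdim : ringKrullDim R = 1) :
    (∀ (M : Type u) (_ : AddCommGroup M) (_ : Module R M)
        (_ : Module.Finite R M) (_ : NoZeroSMulDivisors R M),
      Module.rank (FractionRing R) (LocalizedModule (nonZeroDivisors R) M) = 1 →
      IsLocalRing (Module.End R M)) ↔
    IsLocalRing (integralClosure R (FractionRing R)) :=
  stmt16_general R
end

section
/- Let R be a commutative local integral domain with field of fractions Q, and let a, b, c ∈ R be elements such that the ideal K = aR + bR + cR cannot be generated by two elements. Set α = (a,b,c) ∈ R³ and let H = R³ ∩ Qα, i.e., the submodule of R³ consisting of those vectors whose image in Q³ is a Q-multiple of α. Then M = R³/H is an indecomposable finitely generated torsion-free R-module of rank 2. -/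
universe u

set_option linter.unusedSectionVars false
set_option maxHeartbeats 1000000

open IsLocalRing Submodule

section Aux

variable {R : Type u} [CommRing R] [IsDomain R] [IsLocalRing R]

lemma aux_span_pair (a b c f g h : R) (hf : IsUnit f) (hrel : a * f + b * g + c * h = 0) :
    Ideal.span {a, b, c} = Ideal.span {b, c} := by
  apply le_antisymm
  · rw [Ideal.span_le]
    rintro x hx
    simp only [Set.mem_insert_iff, Set.mem_singleton_iff] at hx
    rcases hx with rfl | rfl | rfl
    · obtain ⟨u, hu⟩ := hf
      have hinv : (↑u⁻¹ : R) * f = 1 := by rw [← hu]; exact u.inv_mul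
      rw [SetLike.mem_coe, Ideal.mem_span_pair]
      exact ⟨-(↑u⁻¹ : R) * g, -(↑u⁻¹ : R) * h, by linear_combination (-(↑u⁻¹ : R)) * hrel + x * hinv⟩
    · exact Submodule.subset_span (by simp)
    · exact Submodule.subset_span (by simp)
  · rw [Ideal.span_le]
    rintro x hx
    simp only [Set.mem_insert_iff, Set.mem_singleton_iff] at hx
    rcases hx with rfl | rfl <;> exact Submodule.subset_span (by simp)

variable (a b c : R) (H : Submodule R (Fin 3 → R))

lemma aux_memH
    (hH : (H : Set (Fin 3 → R)) = {x | ∃ q : FractionRing R, ∀ i,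
      algebraMap R (FractionRing R) (x i) = q * algebraMap R (FractionRing R) (![a, b, c] i)})
    {x : Fin 3 → R} :
    x ∈ H ↔ ∃ q : FractionRing R, ∀ i,
      algebraMap R (FractionRing R) (x i) = q * algebraMap R (FractionRing R) (![a, b, c] i) := by
  constructor
  · intro hx
    have : x ∈ (H : Set (Fin 3 → R)) := hx
    rwa [hH] at this
  · intro hx
    have : x ∈ (H : Set (Fin 3 → R)) := by rw [hH]; exact hx
    exact this

lemma aux_unit_false (hK : ¬ ∃ u v : R, Ideal.span {a, b, c} = Ideal.span {u, v})
    (f g h : R) (hrel : a * f + b * g + c * h = 0)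
    (hu : IsUnit f ∨ IsUnit g ∨ IsUnit h) : False := by
  rcases hu with hu | hu | hu
  · exact hK ⟨b, c, aux_span_pair a b c f g h hu hrel⟩
  · have e : ({a, b, c} : Set R) = {b, a, c} := Set.insert_comm a b {c}
    refine hK ⟨a, c, ?_⟩
    rw [show ({a, b, c} : Set R) = {b, a, c} from e]
    exact aux_span_pair b a c g f h hu (by linear_combination hrel)
  · have e : ({a, b, c} : Set R) = {c, a, b} := by
      ext x; simp only [Set.mem_insert_iff, Set.mem_singleton_iff]; tauto
    refine hK ⟨a, b, ?_⟩
    rw [e]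
    exact aux_span_pair c a b h f g hu (by linear_combination hrel)

lemma aux_nonunit (hK : ¬ ∃ u v : R, Ideal.span {a, b, c} = Ideal.span {u, v})
    (hH : (H : Set (Fin 3 → R)) = {x | ∃ q : FractionRing R, ∀ i,
      algebraMap R (FractionRing R) (x i) = q * algebraMap R (FractionRing R) (![a, b, c] i)}) :
    ∀ x ∈ H, ∀ i, ¬ IsUnit (x i) := by
  intro x hx i hu
  obtain ⟨q, hq⟩ := (aux_memH a b c H hH).1 hx
  obtain ⟨u, hu⟩ := hu
  have h2 : (↑u⁻¹ : R) * x i = 1 := by rw [← hu]; exact u.inv_mul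
  have h2' : algebraMap R (FractionRing R) (↑u⁻¹ : R) * (q * algebraMap R (FractionRing R) (![a, b, c] i)) = 1 := by
    rw [← hq i, ← map_mul, h2, map_one]
  have key : ∀ j, ![a, b, c] j = x j * (↑u⁻¹ : R) * ![a, b, c] i := by
    intro j
    apply IsFractionRing.injective R (FractionRing R)
    rw [map_mul, map_mul, hq j]
    linear_combination (-(algebraMap R (FractionRing R) (![a, b, c] j))) * h2'
  have hmem : ∀ j, (![a, b, c] j : R) ∈ Ideal.span ({![a, b, c] i, 0} : Set R) := by
    intro j
    rw [key j]
    exact Ideal.mul_mem_left _ _ (Submodule.subset_span (by simp))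
  refine hK ⟨![a, b, c] i, 0, le_antisymm ?_ ?_⟩
  · rw [Ideal.span_le]
    rintro y hy
    simp only [Set.mem_insert_iff, Set.mem_singleton_iff] at hy
    rcases hy with rfl | rfl | rfl
    · exact hmem 0
    · exact hmem 1
    · exact hmem 2
  · rw [Ideal.span_le]
    rintro y hy
    simp only [Set.mem_insert_iff, Set.mem_singleton_iff] at hy
    rcases hy with rfl | rfl
    · fin_cases i <;> exact Submodule.subset_span (by simp)
    · exact Submodule.zero_mem _

lemma aux_mem_smul_top (z : Fin 3 → R) :
    z ∈ (maximalIdeal R) • (⊤ : Submodule R (Fin 3 → R)) ↔ ∀ i, z i ∈ maximalIdeal R := by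
  constructor
  · intro hz i
    refine Submodule.smul_induction_on hz ?_ ?_
    · intro r hr n _
      exact Ideal.mul_mem_right _ _ hr
    · intro x y hx hy
      exact Ideal.add_mem _ hx hy
  · intro hz
    rw [pi_eq_sum_univ z]
    refine Submodule.sum_mem _ fun i _ => ?_
    exact Submodule.smul_mem_smul (hz i) trivial


lemma aux_tf (a b c : R) (H : Submodule R (Fin 3 → R))
    (hH : (H : Set (Fin 3 → R)) = {x | ∃ q : FractionRing R, ∀ i,
      algebraMap R (FractionRing R) (x i) = q * algebraMap R (FractionRing R) (![a, b, c] i)}) :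
    NoZeroSMulDivisors R ((Fin 3 → R) ⧸ H) := by
  constructor
  intro r x hrx
  by_cases hr : r = 0
  · exact Or.inl hr
  right
  obtain ⟨x, rfl⟩ := Submodule.Quotient.mk_surjective H x
  rw [← Submodule.Quotient.mk_smul, Submodule.Quotient.mk_eq_zero] at hrx
  rw [Submodule.Quotient.mk_eq_zero]
  obtain ⟨q, hq⟩ := (aux_memH a b c H hH).1 hrx
  have hr' : algebraMap R (FractionRing R) r ≠ 0 :=
    fun h => hr (IsFractionRing.injective R (FractionRing R) (by rw [h, map_zero]))
  refine (aux_memH a b c H hH).2 ⟨q / algebraMap R (FractionRing R) r, fun i => ?_⟩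
  have h1 := hq i
  rw [Pi.smul_apply, smul_eq_mul, map_mul] at h1
  field_simp
  linear_combination h1

noncomputable def rmapQ (R : Type u) [CommRing R] [IsDomain R] :
    (Fin 3 → R) →ₗ[R] (Fin 3 → FractionRing R) :=
  LinearMap.pi fun i => (Algebra.linearMap R (FractionRing R)).comp (LinearMap.proj i)

noncomputable def Vsub : Submodule (FractionRing R) (Fin 3 → FractionRing R) :=
  Submodule.span (FractionRing R) {fun i => algebraMap R (FractionRing R) (![a, b, c] i)}

noncomputable def gmap : (Fin 3 → R) →ₗ[R] ((Fin 3 → FractionRing R) ⧸ Vsub a b c) :=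
  ((Vsub a b c (R := R)).mkQ.restrictScalars R).comp (rmapQ R)

lemma ker_gmap (hH : (H : Set (Fin 3 → R)) = {x | ∃ q : FractionRing R, ∀ i,
      algebraMap R (FractionRing R) (x i) = q * algebraMap R (FractionRing R) (![a, b, c] i)}) : LinearMap.ker (gmap a b c) = H := by
  ext x
  simp only [gmap, LinearMap.mem_ker, LinearMap.comp_apply, LinearMap.restrictScalars_apply,
    Submodule.mkQ_apply, Submodule.Quotient.mk_eq_zero]
  rw [aux_memH a b c H hH]
  unfold Vsub
  rw [Submodule.mem_span_singleton]
  constructor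
  · rintro ⟨q, hq⟩
    refine ⟨q, fun i => ?_⟩
    have h := congrFun hq i
    simp only [rmapQ, LinearMap.pi_apply, LinearMap.comp_apply, LinearMap.proj_apply,
      Algebra.linearMap_apply, Pi.smul_apply, smul_eq_mul] at h
    exact h.symm
  · rintro ⟨q, hq⟩
    refine ⟨q, funext fun i => ?_⟩
    simp only [rmapQ, LinearMap.pi_apply, LinearMap.comp_apply, LinearMap.proj_apply,
      Algebra.linearMap_apply, Pi.smul_apply, smul_eq_mul]
    exact (hq i).symm

noncomputable def gbar (hH : (H : Set (Fin 3 → R)) = {x | ∃ q : FractionRing R, ∀ i,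
      algebraMap R (FractionRing R) (x i) = q * algebraMap R (FractionRing R) (![a, b, c] i)}) :
    ((Fin 3 → R) ⧸ H) →ₗ[R] ((Fin 3 → FractionRing R) ⧸ Vsub a b c) :=
  H.liftQ (gmap a b c) (ker_gmap a b c H hH).ge

lemma ker_gbar (hH : (H : Set (Fin 3 → R)) = {x | ∃ q : FractionRing R, ∀ i,
      algebraMap R (FractionRing R) (x i) = q * algebraMap R (FractionRing R) (![a, b, c] i)}) : LinearMap.ker (gbar a b c H hH) = ⊥ :=
  Submodule.ker_liftQ_eq_bot _ _ _ (ker_gmap a b c H hH).le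

lemma isLocalizedModule_gbar (hH : (H : Set (Fin 3 → R)) = {x | ∃ q : FractionRing R, ∀ i,
      algebraMap R (FractionRing R) (x i) = q * algebraMap R (FractionRing R) (![a, b, c] i)}) :
    IsLocalizedModule (nonZeroDivisors R) (gbar a b c H hH) := by
  constructor
  · intro s
    rw [Module.End.isUnit_iff]
    have hs : (algebraMap R (FractionRing R)) (s : R) ≠ 0 := by
      simpa using nonZeroDivisors.coe_ne_zero s
    constructor
    · intro v w h
      simp only [Module.algebraMap_end_apply] at h
      have h' : (algebraMap R (FractionRing R) (s : R)) • v
          = (algebraMap R (FractionRing R) (s : R)) • w := by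
        rwa [algebraMap_smul, algebraMap_smul]
      exact smul_right_injective _ hs h'
    · intro v
      refine ⟨(algebraMap R (FractionRing R) (s : R))⁻¹ • v, ?_⟩
      simp only [Module.algebraMap_end_apply]
      rw [← algebraMap_smul (FractionRing R) (s : R), smul_smul, mul_inv_cancel₀ hs, one_smul]
  · intro y
    obtain ⟨w, rfl⟩ := Submodule.Quotient.mk_surjective _ y
    obtain ⟨s, hs⟩ := IsLocalization.exist_integer_multiples_of_finite
      (nonZeroDivisors R) (S := FractionRing R) w
    choose m hm using hs
    refine ⟨⟨Submodule.Quotient.mk m, s⟩, ?_⟩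
    have : gbar a b c H hH (Submodule.Quotient.mk m) = Submodule.Quotient.mk (rmapQ R m) := rfl
    rw [this]
    have h2 : rmapQ R m = (s : R) • w := by
      funext i
      have h := hm i
      simp only [rmapQ, LinearMap.pi_apply, LinearMap.comp_apply, LinearMap.proj_apply,
        Algebra.linearMap_apply, Pi.smul_apply]
      rw [h]
    rw [h2, ← Submodule.Quotient.mk_smul]
    rfl
  · intro x y h
    refine ⟨1, ?_⟩
    have := LinearMap.ker_eq_bot.mp (ker_gbar a b c H hH) h
    rw [this]

noncomputable def locEquiv (hH : (H : Set (Fin 3 → R)) = {x | ∃ q : FractionRing R, ∀ i,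
      algebraMap R (FractionRing R) (x i) = q * algebraMap R (FractionRing R) (![a, b, c] i)}) : LocalizedModule (nonZeroDivisors R) ((Fin 3 → R) ⧸ H)
    ≃ₗ[R] ((Fin 3 → FractionRing R) ⧸ Vsub a b c) :=
  have := isLocalizedModule_gbar a b c H hH
  IsLocalizedModule.iso (nonZeroDivisors R) (gbar a b c H hH)

noncomputable def locEquivQ (hH : (H : Set (Fin 3 → R)) = {x | ∃ q : FractionRing R, ∀ i,
      algebraMap R (FractionRing R) (x i) = q * algebraMap R (FractionRing R) (![a, b, c] i)}) :
    LocalizedModule (nonZeroDivisors R) ((Fin 3 → R) ⧸ H)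
    ≃ₗ[FractionRing R] ((Fin 3 → FractionRing R) ⧸ Vsub a b c) :=
  LinearEquiv.ofLinear
    ((locEquiv a b c H hH).toLinearMap.extendScalarsOfIsLocalization (nonZeroDivisors R)
      (FractionRing R))
    ((locEquiv a b c H hH).symm.toLinearMap.extendScalarsOfIsLocalization (nonZeroDivisors R)
      (FractionRing R))
    (by refine LinearMap.ext fun v => ?_; exact (locEquiv a b c H hH).apply_symm_apply v)
    (by refine LinearMap.ext fun v => ?_; exact (locEquiv a b c H hH).symm_apply_apply v)

lemma rank_result (hH : (H : Set (Fin 3 → R)) = {x | ∃ q : FractionRing R, ∀ i,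
      algebraMap R (FractionRing R) (x i) = q * algebraMap R (FractionRing R) (![a, b, c] i)}) (hK : ¬ ∃ u v : R, Ideal.span {a, b, c} = Ideal.span {u, v}) :
    Module.rank (FractionRing R) (LocalizedModule (nonZeroDivisors R) ((Fin 3 → R) ⧸ H)) = 2 := by
  rw [(locEquivQ a b c H hH).rank_eq]
  have hne : (fun i => algebraMap R (FractionRing R) (![a, b, c] i)) ≠ 0 := by
    intro h0
    have hz : ∀ i : Fin 3, (![a, b, c] i : R) = 0 := by
      intro i
      have := congrFun h0 i
      exact IsFractionRing.injective R (FractionRing R) (by rw [map_zero, this]; simp)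
    refine hK ⟨0, 0, ?_⟩
    have ha : a = 0 := hz 0
    have hb : b = 0 := hz 1
    have hc : c = 0 := hz 2
    rw [ha, hb, hc]
    simp
  have h1 : Module.finrank (FractionRing R) (Vsub a b c (R := R)) = 1 :=
    finrank_span_singleton hne
  have h3 : Module.finrank (FractionRing R) (Fin 3 → FractionRing R) = 3 := by
    simp [Module.finrank_pi]
  have h2 := Submodule.finrank_quotient_add_finrank (Vsub a b c (R := R))
  rw [h1, h3] at h2
  have : Module.finrank (FractionRing R) ((Fin 3 → FractionRing R) ⧸ Vsub a b c (R := R)) = 2 := by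
    omega
  rw [← Module.finrank_eq_rank, this]
  norm_num


noncomputable def resMap (R : Type u) [CommRing R] [IsLocalRing R] :
    (Fin 3 → R) →ₗ[R] (Fin 3 → ResidueField R) :=
  LinearMap.pi fun i => (Algebra.linearMap R (ResidueField R)).comp (LinearMap.proj i)

lemma resMap_eq_zero_iff (x : Fin 3 → R) :
    resMap R x = 0 ↔ ∀ i, x i ∈ maximalIdeal R := by
  constructor
  · intro h i
    have := congrFun h i
    simp only [resMap, LinearMap.pi_apply, LinearMap.comp_apply, LinearMap.proj_apply,
      Algebra.linearMap_apply, Pi.zero_apply] at this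
    rw [IsLocalRing.ResidueField.algebraMap_eq] at this
    exact Ideal.Quotient.eq_zero_iff_mem.mp this
  · intro h
    funext i
    simp only [resMap, LinearMap.pi_apply, LinearMap.comp_apply, LinearMap.proj_apply,
      Algebra.linearMap_apply, Pi.zero_apply]
    rw [IsLocalRing.ResidueField.algebraMap_eq]
    exact Ideal.Quotient.eq_zero_iff_mem.mpr (h i)

lemma resMap_surjective : Function.Surjective (resMap R) := by
  intro w
  have : ∀ i, ∃ r : R, algebraMap R (ResidueField R) r = w i := fun i =>
    Ideal.Quotient.mk_surjective (w i)
  choose x hx using this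
  exact ⟨x, funext fun i => hx i⟩

lemma aux_H_le_smul_top (a b c : R)
    (hK : ¬ ∃ u v : R, Ideal.span {a, b, c} = Ideal.span {u, v})
    (hH : (H : Set (Fin 3 → R)) = {x | ∃ q : FractionRing R, ∀ i,
      algebraMap R (FractionRing R) (x i) = q * algebraMap R (FractionRing R) (![a, b, c] i)}) : H ≤ (maximalIdeal R) • (⊤ : Submodule R (Fin 3 → R)) := by
  intro x hx
  rw [aux_mem_smul_top]
  intro i
  rw [IsLocalRing.mem_maximalIdeal, mem_nonunits_iff]
  exact aux_nonunit a b c H hK hH x hx i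

noncomputable def resSpan (p : Submodule R ((Fin 3 → R) ⧸ H)) :
    Submodule (ResidueField R) (Fin 3 → ResidueField R) :=
  Submodule.span (ResidueField R) (resMap R '' (p.comap H.mkQ))

lemma resSpan_elems (p : Submodule R ((Fin 3 → R) ⧸ H)) :
    ∀ w ∈ resSpan H p, ∃ x ∈ p.comap H.mkQ, resMap R x = w := by
  intro w hw
  refine Submodule.span_induction ?_ ?_ ?_ ?_ hw
  · rintro w ⟨x, hx, rfl⟩
    exact ⟨x, hx, rfl⟩
  · exact ⟨0, Submodule.zero_mem _, map_zero _⟩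
  · rintro w₁ w₂ - - ⟨x₁, hx₁, rfl⟩ ⟨x₂, hx₂, rfl⟩
    exact ⟨x₁ + x₂, Submodule.add_mem _ hx₁ hx₂, map_add _ _ _⟩
  · rintro lam w - ⟨x, hx, rfl⟩
    obtain ⟨r, hr⟩ := Ideal.Quotient.mk_surjective lam
    refine ⟨r • x, Submodule.smul_mem _ _ hx, ?_⟩
    rw [map_smul, ← hr]
    rw [show (Ideal.Quotient.mk (maximalIdeal R) r : ResidueField R)
      = algebraMap R (ResidueField R) r from rfl, algebraMap_smul]

lemma comap_sup_eq_top (p q : Submodule R ((Fin 3 → R) ⧸ H)) (hsup : p ⊔ q = ⊤) :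
    p.comap H.mkQ ⊔ q.comap H.mkQ = ⊤ := by
  rw [eq_top_iff]
  intro v _
  have hv : H.mkQ v ∈ p ⊔ q := by rw [hsup]; trivial
  obtain ⟨y, hy, z, hz, hyz⟩ := Submodule.mem_sup.mp hv
  obtain ⟨v₁, hv₁⟩ := H.mkQ_surjective y
  obtain ⟨v₂, hv₂⟩ := H.mkQ_surjective z
  refine Submodule.mem_sup.mpr ⟨v₁, ?_, v₂ + (v - v₁ - v₂), ?_, by abel⟩
  · rw [Submodule.mem_comap, hv₁]; exact hy
  · have hmem : v - v₁ - v₂ ∈ H := by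
      rw [← Submodule.Quotient.mk_eq_zero]
      have : H.mkQ (v - v₁ - v₂) = H.mkQ v - H.mkQ v₁ - H.mkQ v₂ := by
        simp [map_sub]
      rw [show Submodule.Quotient.mk (p := H) (v - v₁ - v₂) = H.mkQ (v - v₁ - v₂) from rfl,
        this, hv₁, hv₂, ← hyz]
      abel
    have h2 : H.mkQ (v₂ + (v - v₁ - v₂)) = z := by
      rw [map_add, hv₂]
      have : H.mkQ (v - v₁ - v₂) = 0 := (Submodule.Quotient.mk_eq_zero H).mpr hmem
      rw [this, add_zero]
    rw [Submodule.mem_comap, h2]; exact hz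

lemma smul_top_M_eq (p q : Submodule R ((Fin 3 → R) ⧸ H)) (hc : IsCompl p q) :
    (maximalIdeal R) • (⊤ : Submodule R ((Fin 3 → R) ⧸ H))
      = (maximalIdeal R) • p ⊔ (maximalIdeal R) • q := by
  rw [← hc.sup_eq_top, Submodule.smul_sup]

lemma mkQ_mem_smul_top (x : Fin 3 → R) (hx : x ∈ (maximalIdeal R) • (⊤ : Submodule R (Fin 3 → R))) :
    H.mkQ x ∈ (maximalIdeal R) • (⊤ : Submodule R ((Fin 3 → R) ⧸ H)) := by
  have : H.mkQ x ∈ ((maximalIdeal R) • (⊤ : Submodule R (Fin 3 → R))).map H.mkQ :=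
    Submodule.mem_map_of_mem hx
  rwa [Submodule.map_smul'', Submodule.map_top, Submodule.range_mkQ] at this

lemma p_inf_smul (p q : Submodule R ((Fin 3 → R) ⧸ H)) (hc : IsCompl p q)
    {y : (Fin 3 → R) ⧸ H} (hyp : y ∈ p)
    (hy : y ∈ (maximalIdeal R) • (⊤ : Submodule R ((Fin 3 → R) ⧸ H))) :
    y ∈ (maximalIdeal R) • p := by
  rw [smul_top_M_eq H p q hc] at hy
  obtain ⟨u₁, hu₁, v₁, hv₁, huv⟩ := Submodule.mem_sup.mp hy
  have hv₁' : v₁ = y - u₁ := by rw [← huv]; abel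
  have : v₁ ∈ p ⊓ q := by
    constructor
    · rw [hv₁']
      exact Submodule.sub_mem _ hyp (Submodule.smul_le_right hu₁)
    · exact Submodule.smul_le_right hv₁
  rw [hc.inf_eq_bot] at this
  rw [Submodule.mem_bot] at this
  rw [this, add_zero] at huv
  rwa [← huv]

lemma resSpan_inf (a b c : R)
    (hK : ¬ ∃ u v : R, Ideal.span {a, b, c} = Ideal.span {u, v})
    (hH : (H : Set (Fin 3 → R)) = {x | ∃ q : FractionRing R, ∀ i,
      algebraMap R (FractionRing R) (x i) = q * algebraMap R (FractionRing R) (![a, b, c] i)}) (p q : Submodule R ((Fin 3 → R) ⧸ H)) (hc : IsCompl p q) :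
    resSpan H p ⊓ resSpan H q = ⊥ := by
  rw [eq_bot_iff]
  rintro w ⟨hwP, hwQ⟩
  obtain ⟨x, hxp, hx⟩ := resSpan_elems H p w hwP
  obtain ⟨y, hyq, hy⟩ := resSpan_elems H q w hwQ
  have hxy : ∀ i, (x - y) i ∈ maximalIdeal R := by
    rw [← resMap_eq_zero_iff, map_sub, hx, hy, sub_self]
  have h1 : H.mkQ (x - y) ∈ (maximalIdeal R) • (⊤ : Submodule R ((Fin 3 → R) ⧸ H)) :=
    mkQ_mem_smul_top H _ ((aux_mem_smul_top (x - y)).mpr hxy)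
  have h2 : H.mkQ x - H.mkQ y ∈ (maximalIdeal R) • (⊤ : Submodule R ((Fin 3 → R) ⧸ H)) := by
    have h1' := h1
    rwa [map_sub] at h1'
  -- H.mkQ x ∈ p, H.mkQ y ∈ q, their difference is in m•⊤ = m•p ⊔ m•q
  rw [smul_top_M_eq H p q hc] at h2
  obtain ⟨u₁, hu₁, v₁, hv₁, huv⟩ := Submodule.mem_sup.mp h2
  have key : H.mkQ x - u₁ ∈ p ⊓ q := by
    constructor
    · exact Submodule.sub_mem _ (Submodule.mem_comap.mp hxp) (Submodule.smul_le_right hu₁)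
    · have h4 : u₁ + v₁ + H.mkQ y = H.mkQ x := by rw [huv]; abel
      have h5 : H.mkQ x - u₁ = H.mkQ y + v₁ := by rw [← h4]; abel
      rw [h5]
      exact Submodule.add_mem _ (Submodule.mem_comap.mp hyq) (Submodule.smul_le_right hv₁)
  rw [hc.inf_eq_bot, Submodule.mem_bot, sub_eq_zero] at key
  -- so H.mkQ x ∈ m•p ≤ m•⊤(M), pull back
  have hxm : H.mkQ x ∈ (maximalIdeal R) • (⊤ : Submodule R ((Fin 3 → R) ⧸ H)) := by
    rw [key]
    exact Submodule.smul_mono le_rfl le_top hu₁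
  -- H.mkQ x = H.mkQ z for some z with coords in m
  have : H.mkQ x ∈ ((maximalIdeal R) • (⊤ : Submodule R (Fin 3 → R))).map H.mkQ := by
    rwa [Submodule.map_smul'', Submodule.map_top, Submodule.range_mkQ]
  obtain ⟨z, hz, hzx⟩ := Submodule.mem_map.mp this
  have hxz : x - z ∈ H := by
    rw [← Submodule.Quotient.mk_eq_zero]
    have : H.mkQ (x - z) = H.mkQ x - H.mkQ z := by simp [map_sub]
    rw [show Submodule.Quotient.mk (p := H) (x - z) = H.mkQ (x - z) from rfl, this, hzx, sub_self]
  have hxmem : x ∈ (maximalIdeal R) • (⊤ : Submodule R (Fin 3 → R)) := by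
    have : x = z + (x - z) := by abel
    rw [this]
    exact Submodule.add_mem _ hz (aux_H_le_smul_top H a b c hK hH hxz)
  rw [Submodule.mem_bot, ← hx, resMap_eq_zero_iff]
  exact (aux_mem_smul_top x).mp hxmem

lemma resSpan_sup (p q : Submodule R ((Fin 3 → R) ⧸ H)) (hsup : p ⊔ q = ⊤) :
    resSpan H p ⊔ resSpan H q = ⊤ := by
  rw [eq_top_iff]
  intro w _
  obtain ⟨x, rfl⟩ := resMap_surjective (R := R) w
  have hx : x ∈ p.comap H.mkQ ⊔ q.comap H.mkQ := by
    rw [comap_sup_eq_top H p q hsup]; trivial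
  obtain ⟨x₁, hx₁, x₂, hx₂, hxx⟩ := Submodule.mem_sup.mp hx
  rw [← hxx, map_add]
  exact Submodule.add_mem _
    (Submodule.mem_sup_left (Submodule.subset_span ⟨x₁, hx₁, rfl⟩))
    (Submodule.mem_sup_right (Submodule.subset_span ⟨x₂, hx₂, rfl⟩))

lemma aux_main1 (hK : ¬ ∃ u v : R, Ideal.span {a, b, c} = Ideal.span {u, v})
    (hH : (H : Set (Fin 3 → R)) = {x | ∃ q : FractionRing R, ∀ i,
      algebraMap R (FractionRing R) (x i) = q * algebraMap R (FractionRing R) (![a, b, c] i)}) 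
    (p q : Submodule R ((Fin 3 → R) ⧸ H)) (hc : IsCompl p q) (hp : p ≠ ⊥)
    (hdim : Module.rank (ResidueField R) (resSpan H p) ≤ 1) : False := by
  haveI := aux_tf a b c H hH
  haveI : Module.Finite R ((Fin 3 → R) ⧸ H) := Module.Finite.quotient R H
  haveI hfinp : Module.Finite R p :=
    Module.Finite.equiv (Submodule.quotientEquivOfIsCompl q p hc.symm)
  have hfg : p.FG := (Module.Finite.iff_fg (N := p)).mp inferInstance
  obtain ⟨v₀, hv₀, hle⟩ := (rank_submodule_le_one_iff _).mp hdim
  obtain ⟨u, hup, hu⟩ := resSpan_elems H p v₀ hv₀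
  have hkey : p ≤ Submodule.span R {H.mkQ u} ⊔ (maximalIdeal R) • p := by
    intro y hy
    obtain ⟨x, hx⟩ := H.mkQ_surjective y
    have hxp : x ∈ p.comap H.mkQ := Submodule.mem_comap.mpr (hx ▸ hy)
    have hres : resMap R x ∈ Submodule.span (ResidueField R) {v₀} :=
      hle (Submodule.subset_span ⟨x, hxp, rfl⟩)
    obtain ⟨lam, hlam⟩ := Submodule.mem_span_singleton.mp hres
    obtain ⟨r, hr⟩ := Ideal.Quotient.mk_surjective lam
    have hzres : resMap R (x - r • u) = 0 := by
      rw [map_sub, map_smul, hu, ← hlam, ← hr,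
        show (Ideal.Quotient.mk (maximalIdeal R) r : ResidueField R)
          = algebraMap R (ResidueField R) r from rfl, algebraMap_smul, sub_self]
    have hcoords : ∀ i, (x - r • u) i ∈ maximalIdeal R := (resMap_eq_zero_iff _).mp hzres
    have hz1 : H.mkQ (x - r • u) ∈ (maximalIdeal R) • (⊤ : Submodule R ((Fin 3 → R) ⧸ H)) :=
      mkQ_mem_smul_top H _ ((aux_mem_smul_top _).mpr hcoords)
    have hz2 : H.mkQ (x - r • u) ∈ p := by
      rw [map_sub, map_smul]
      exact Submodule.sub_mem _ (Submodule.mem_comap.mp hxp)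
        (Submodule.smul_mem _ _ (Submodule.mem_comap.mp hup))
    have hz3 : H.mkQ (x - r • u) ∈ (maximalIdeal R) • p := p_inf_smul H p q hc hz2 hz1
    have hy' : y = r • H.mkQ u + H.mkQ (x - r • u) := by
      rw [map_sub, map_smul, ← hx]; abel
    rw [hy']
    exact Submodule.add_mem _
      (Submodule.mem_sup_left (Submodule.smul_mem _ _ (Submodule.mem_span_singleton_self _)))
      (Submodule.mem_sup_right hz3)
  have hnak : p ≤ Submodule.span R {H.mkQ u} :=
    Submodule.le_of_le_smul_of_le_jacobson_bot hfg
      (by rw [IsLocalRing.jacobson_eq_maximalIdeal ⊥ bot_ne_top]) hkey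
  have hup' : H.mkQ u ∈ p := Submodule.mem_comap.mp hup
  have hspan : p = Submodule.span R {H.mkQ u} :=
    le_antisymm hnak ((Submodule.span_singleton_le_iff_mem _ _).mpr hup')
  have hxg0 : H.mkQ u ≠ 0 := by
    intro h0
    apply hp
    rw [hspan, h0, Submodule.span_zero_singleton]
  set pr := p.linearProjOfIsCompl q hc with hpr
  have hf : ∀ i : Fin 3, ∃ fi : R,
      ((pr (H.mkQ (Pi.single i 1))) : (Fin 3 → R) ⧸ H) = fi • H.mkQ u := by
    intro i
    have hmem : ((pr (H.mkQ (Pi.single i 1))) : (Fin 3 → R) ⧸ H) ∈ p := (pr _).2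
    obtain ⟨fi, hfi⟩ := Submodule.mem_span_singleton.mp (hnak hmem)
    exact ⟨fi, hfi.symm⟩
  choose f hfspec using hf
  set w : (Fin 3 → R) →ₗ[R] R := ∑ i, f i • LinearMap.proj i with hwdef
  have hFG : p.subtype.comp (pr.comp H.mkQ) = LinearMap.smulRight w (H.mkQ u) := by
    apply Module.Basis.ext (Pi.basisFun R (Fin 3))
    intro i
    rw [Pi.basisFun_apply]
    simp only [LinearMap.comp_apply, Submodule.coe_subtype, LinearMap.smulRight_apply, hwdef,
      LinearMap.sum_apply, LinearMap.smul_apply, LinearMap.proj_apply, smul_eq_mul]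
    rw [hfspec i]
    congr 1
    simp [Pi.single_apply, mul_ite]
  have hα : (![a, b, c]) ∈ H := (aux_memH a b c H hH).mpr ⟨1, fun i => (one_mul _).symm⟩
  have hFα : p.subtype.comp (pr.comp H.mkQ) ![a, b, c] = 0 := by
    simp only [LinearMap.comp_apply]
    have h0 : H.mkQ ![a, b, c] = 0 := (Submodule.Quotient.mk_eq_zero H).mpr hα
    rw [h0, map_zero]
    rfl
  have hGα : (w ![a, b, c]) • H.mkQ u = 0 := by
    rw [← LinearMap.smulRight_apply, ← hFG]; exact hFα
  have hw0 : w ![a, b, c] = 0 := by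
    rcases smul_eq_zero.mp hGα with h | h
    · exact h
    · exact absurd h hxg0
  have hrel : a * f 0 + b * f 1 + c * f 2 = 0 := by
    have hval : w ![a, b, c] = f 0 * a + f 1 * b + f 2 * c := by
      simp [hwdef, Fin.sum_univ_three]
    rw [hval] at hw0
    linear_combination hw0
  have hxgeq : p.subtype.comp (pr.comp H.mkQ) u = H.mkQ u := by
    simp only [LinearMap.comp_apply]
    have h1 : pr (H.mkQ u) = ⟨H.mkQ u, hup'⟩ :=
      Submodule.linearProjOfIsCompl_apply_left hc ⟨H.mkQ u, hup'⟩
    rw [h1]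
    rfl
  have hwu : w u = 1 := by
    have h1 : (w u) • H.mkQ u = H.mkQ u := by
      rw [← LinearMap.smulRight_apply, ← hFG]; exact hxgeq
    have h2 : (w u - 1) • H.mkQ u = 0 := by rw [sub_smul, one_smul, h1, sub_self]
    rcases smul_eq_zero.mp h2 with h | h
    · exact sub_eq_zero.mp h
    · exact absurd h hxg0
  have hunit : IsUnit (f 0) ∨ IsUnit (f 1) ∨ IsUnit (f 2) := by
    by_contra hno
    push_neg at hno
    obtain ⟨h0, h1, h2⟩ := hno
    have hm : ∀ i, f i ∈ maximalIdeal R := by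
      intro i
      fin_cases i <;> rw [IsLocalRing.mem_maximalIdeal, mem_nonunits_iff] <;> assumption
    have hmem : w u ∈ maximalIdeal R := by
      have hval : w u = ∑ i, f i * u i := by simp [hwdef]
      rw [hval]
      exact Ideal.sum_mem _ fun i _ => Ideal.mul_mem_right _ _ (hm i)
    rw [hwu] at hmem
    exact (Ideal.ne_top_iff_one _).mp (Ideal.IsMaximal.ne_top inferInstance) hmem
  exact aux_unit_false a b c hK (f 0) (f 1) (f 2) hrel hunit

lemma aux_indec (hK : ¬ ∃ u v : R, Ideal.span {a, b, c} = Ideal.span {u, v})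
    (hH : (H : Set (Fin 3 → R)) = {x | ∃ q : FractionRing R, ∀ i,
      algebraMap R (FractionRing R) (x i) = q * algebraMap R (FractionRing R) (![a, b, c] i)}) :
    ∀ p q : Submodule R ((Fin 3 → R) ⧸ H), IsCompl p q → p = ⊥ ∨ q = ⊥ := by
  intro p q hc
  by_contra hboth
  push_neg at hboth
  obtain ⟨hp, hq⟩ := hboth
  have hsup := resSpan_sup H p q hc.sup_eq_top
  have hinf := resSpan_inf H a b c hK hH p q hc
  have hdim := Submodule.finrank_sup_add_finrank_inf_eq (resSpan H p) (resSpan H q)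
  rw [hsup, hinf, finrank_top, finrank_bot] at hdim
  have h3 : Module.finrank (ResidueField R) (Fin 3 → ResidueField R) = 3 := by
    simp [Module.finrank_pi]
  rw [h3] at hdim
  have torank : ∀ s : Submodule (ResidueField R) (Fin 3 → ResidueField R),
      Module.finrank (ResidueField R) s ≤ 1 → Module.rank (ResidueField R) s ≤ 1 := by
    intro s hs
    rw [← Module.finrank_eq_rank]
    exact_mod_cast hs
  have hcases : Module.finrank (ResidueField R) (resSpan H p) ≤ 1
      ∨ Module.finrank (ResidueField R) (resSpan H q) ≤ 1 := by omega
  rcases hcases with h | h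
  · exact aux_main1 a b c H hK hH p q hc hp (torank _ h)
  · exact aux_main1 a b c H hK hH q p hc.symm hq (torank _ h)


end Aux

/-- Let `R` be a commutative local domain with fraction field `Q`, and
let `a, b, c ∈ R` be such that the ideal `K = aR + bR + cR` cannot be generated by two
elements.  Let `α = (a,b,c) ∈ R³` and `H = R³ ∩ Qα` (the vectors whose image in `Q³` is a
`Q`-multiple of `α`).  Then `M = R³/H` is an indecomposable finitely generated
torsion-free `R`-module of rank 2. -/
theorem stmt18 (R : Type u) [CommRing R] [IsDomain R] [IsLocalRing R]
    (a b c : R) (hK : ¬ ∃ u v : R, Ideal.span {a, b, c} = Ideal.span {u, v})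
    (H : Submodule R (Fin 3 → R))
    (hH : (H : Set (Fin 3 → R)) = {x | ∃ q : FractionRing R, ∀ i,
      algebraMap R (FractionRing R) (x i) = q * algebraMap R (FractionRing R) (![a, b, c] i)}) :
    Module.Finite R ((Fin 3 → R) ⧸ H) ∧
    NoZeroSMulDivisors R ((Fin 3 → R) ⧸ H) ∧
    Nontrivial ((Fin 3 → R) ⧸ H) ∧
    (∀ p q : Submodule R ((Fin 3 → R) ⧸ H), IsCompl p q → p = ⊥ ∨ q = ⊥) ∧
    Module.rank (FractionRing R) (LocalizedModule (nonZeroDivisors R) ((Fin 3 → R) ⧸ H)) = 2 := by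
  refine ⟨Module.Finite.quotient R H, aux_tf a b c H hH, ?_, aux_indec a b c H hK hH,
    rank_result a b c H hH hK⟩
  refine ⟨⟨Submodule.Quotient.mk (Pi.single 0 1), 0, ?_⟩⟩
  rw [Ne, Submodule.Quotient.mk_eq_zero]
  intro hmem
  exact aux_nonunit a b c H hK hH (Pi.single 0 1) hmem 0 (by simp)
end

section
/- Let R be a commutative integral domain of finite character and let k ≥ 2 be an integer. If I is a nonzero finitely generated ideal of R such that for every maximal ideal 𝔪 of R the ideal IR_𝔪 of R_𝔪 can be generated by at most k elements, then I can be generated by at most k elements. -/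
/-!
By Nakayama and the local-global principle, a subideal `J ⊆ I` equals `I` as soon as
`I ≤ J ⊔ 𝔪 I` for every maximal ideal `𝔪`. Fix `0 ≠ a₀ ∈ I`. Since `I ≠ 𝔪 I`, the Chinese
remainder theorem modulo the ideals `𝔪 I` for the finitely many `𝔪 ∋ a₀` gives `0 ≠ a ∈ I` with
`a ∉ 𝔪 I` for all of them. At such `𝔪`, `a` can be exchanged into `k` generators of `I R_𝔪`
(cleared of denominators), leaving `y₁, …, y_{k-1} ∈ I` with `I ≤ (a, y) ⊔ 𝔪 I`; at the other
maximal ideals `I R_𝔪 = R_𝔪` and every `yⱼ = a₀` does. As `a` lies in only finitely many maximal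
ideals, the Chinese remainder theorem modulo `𝔪 I` glues the `yⱼ` into global `bⱼ ∈ I`, and
`I = (a, b₁, …, b_{k-1})`: at maximal ideals not containing `a`, the element `a` alone suffices.
-/

open Ideal Function

theorem Finset.exists_fin_subset_range {α : Type*} (s : Finset α) {k : ℕ} (hs : s.card ≤ k)
    (d : α) : ∃ g : Fin k → α, ↑s ⊆ Set.range g ∧ Set.range g ⊆ insert d ↑s := by
  classical
  refine ⟨fun j ↦ if hj : (j : ℕ) < s.card then s.equivFin.symm ⟨j, hj⟩ else d, ?_, ?_⟩
  · intro y hy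
    refine ⟨Fin.castLE hs (s.equivFin ⟨y, hy⟩), ?_⟩
    simp
  · rintro _ ⟨j, rfl⟩
    dsimp only
    split_ifs
    · exact Set.mem_insert_of_mem _ (Finset.coe_mem _)
    · exact Set.mem_insert _ _

namespace Ideal

variable {R : Type*} [CommRing R]

theorem mem_sup_mul_of_mul_mem {𝔪 I P : Ideal R} (h𝔪 : 𝔪.IsMaximal) {q t : R} (hq : q ∉ 𝔪)
    (ht : t ∈ I) (hqt : q * t ∈ P) : t ∈ P ⊔ 𝔪 * I := by
  obtain ⟨y, i, hi, hyi⟩ := h𝔪.exists_inv hq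
  have ht_eq : t = y * (q * t) + i * t := by linear_combination (-t) * hyi
  rw [ht_eq]
  exact add_mem (mem_sup_left (P.mul_mem_left _ hqt)) (mem_sup_right (mul_mem_mul hi ht))

theorem le_span_sup_mul_of_notMem {𝔪 I : Ideal R} (h𝔪 : 𝔪.IsMaximal) {s : Set R} {q : R}
    (hqs : q ∈ s) (hq : q ∉ 𝔪) : I ≤ span s ⊔ 𝔪 * I := fun _ ht ↦
  mem_sup_mul_of_mul_mem h𝔪 hq ht (mul_mem_right _ _ (subset_span hqs))

theorem not_le_mul_self_of_fg [IsDomain R] {I J : Ideal R} (hI : I ≠ ⊥) (hfg : I.FG)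
    (hJ : J ≠ ⊤) : ¬ I ≤ J * I := by
  intro hle
  obtain ⟨r, hr1, hr0⟩ :=
    Submodule.exists_sub_one_mem_and_smul_eq_zero_of_fg_of_le_smul J I hfg (by simpa using hle)
  obtain ⟨x, hxI, hx0⟩ := Submodule.exists_mem_ne_zero_of_ne_bot hI
  have hr : r = 0 := (mul_eq_zero.1 (hr0 x hxI)).resolve_right hx0
  exact hJ ((eq_top_iff_one _).2 (by simpa [hr] using J.neg_mem hr1))

theorem exists_mem_forall_sub_mem_mul {ι : Type*} [Finite ι] {J : ι → Ideal R}
    (hJ : Pairwise (IsCoprime on J)) (I : Ideal R) (x : ι → R) (hx : ∀ i, x i ∈ I) :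
    ∃ b ∈ I, ∀ i, b - x i ∈ J i * I := by
  classical
  have := Fintype.ofFinite ι
  -- `e i ≡ 1 mod J i` and `e i ≡ 0 mod J j` for `j ≠ i`
  choose e he using fun i ↦ exists_forall_sub_mem_ideal hJ (Pi.single i 1)
  refine ⟨∑ i, e i * x i, Submodule.sum_mem _ fun i _ ↦ I.mul_mem_left _ (hx i), fun j ↦ ?_⟩
  have hsum : ∑ i, e i * x i - x j = ∑ i, (e i - Pi.single (M := fun _ ↦ R) i 1 j) * x i := by
    simp [sub_mul, Finset.sum_sub_distrib, Pi.single_apply]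
  rw [hsum]
  exact Submodule.sum_mem _ fun i _ ↦ mul_mem_mul (he i j) (hx i)

theorem le_of_forall_le_sup_mul {I J : Ideal R} (hI : I.FG)
    (h : ∀ 𝔪 : Ideal R, 𝔪.IsMaximal → I ≤ J ⊔ 𝔪 * I) : I ≤ J := by
  refine le_of_localization_maximal fun 𝔪 h𝔪 ↦ ?_
  let φ := algebraMap R (Localization.AtPrime 𝔪)
  have hloc : map φ I ≤ map φ J ⊔ map φ 𝔪 • map φ I := by
    rw [smul_eq_mul, ← Ideal.map_mul, ← map_sup]
    exact map_mono (h 𝔪 h𝔪)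
  refine Submodule.le_of_le_smul_of_le_jacobson_bot (hI.map φ) ?_ hloc
  rw [IsLocalRing.jacobson_eq_maximalIdeal ⊥ bot_ne_top, Localization.AtPrime.map_eq_maximalIdeal]

theorem span_insert_range_le_sup {ι : Type*} {J : Ideal R} (a : R) {y b : ι → R}
    (h : ∀ j, b j - y j ∈ J) :
    span (insert a (Set.range y)) ≤ span (insert a (Set.range b)) ⊔ J := by
  refine span_le.2 (Set.insert_subset (mem_sup_left (subset_span (Set.mem_insert _ _))) ?_)
  rintro _ ⟨j, rfl⟩
  have hy : y j = b j - (b j - y j) := by ring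
  rw [hy]
  exact sub_mem (mem_sup_left (subset_span (Set.mem_insert_of_mem _ ⟨j, rfl⟩)))
    (mem_sup_right (h j))

theorem exists_fin_le_span_insert_sup_mul {𝔪 I : Ideal R} (h𝔪 : 𝔪.IsMaximal) {n : ℕ}
    {x : Fin (n + 1) → R} (hxI : ∀ j, x j ∈ I) (hx : I ≤ span (Set.range x) ⊔ 𝔪 * I)
    {a : R} (haI : a ∈ I) (ha : a ∉ 𝔪 * I) :
    ∃ y : Fin n → R, (∀ j, y j ∈ I) ∧ I ≤ span (insert a (Set.range y)) ⊔ 𝔪 * I := by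
  obtain ⟨z, hz, w, hw, rfl⟩ := Submodule.mem_sup.1 (hx haI)
  obtain ⟨c, rfl⟩ := mem_span_range_iff_exists_fun.1 hz
  obtain ⟨i, hi⟩ : ∃ i, c i ∉ 𝔪 := by
    by_contra! hc
    exact ha (add_mem (Submodule.sum_mem _ fun j _ ↦ mul_mem_mul (hc j) (hxI j)) hw)
  set Q := span (insert (∑ j, c j * x j + w) (Set.range (x ∘ i.succAbove))) ⊔ 𝔪 * I
  refine ⟨x ∘ i.succAbove, fun j ↦ hxI _, hx.trans (sup_le (span_le.2 ?_) le_sup_right)⟩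
  have hmem : ∀ j, x (i.succAbove j) ∈ Q := fun j ↦
    mem_sup_left (subset_span (Set.mem_insert_of_mem _ ⟨j, rfl⟩))
  have hci : c i * x i ∈ Q := by
    have h : c i * x i =
        (∑ j, c j * x j + w) - w - ∑ j, c (i.succAbove j) * x (i.succAbove j) := by
      rw [Fin.sum_univ_succAbove _ i]; ring
    rw [h]
    exact sub_mem (sub_mem (mem_sup_left (subset_span (Set.mem_insert _ _)))
      (mem_sup_right hw)) (Submodule.sum_mem _ fun j _ ↦ Q.mul_mem_left _ (hmem j))
  rintro _ ⟨j, rfl⟩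
  obtain rfl | ⟨j, rfl⟩ := i.eq_self_or_eq_succAbove j
  · simpa [Q, sup_assoc] using mem_sup_mul_of_mul_mem h𝔪 hi (hxI _) hci
  · exact hmem j

theorem exists_fin_le_span_range_sup_mul_of_map_eq_span {𝔪 : Ideal R} [𝔪.IsMaximal]
    {I : Ideal R} {k : ℕ} {s : Finset (Localization.AtPrime 𝔪)} (hs : s.card ≤ k)
    (hI : map (algebraMap R (Localization.AtPrime 𝔪)) I = span ↑s) :
    ∃ x : Fin k → R, (∀ j, x j ∈ I) ∧ I ≤ span (Set.range x) ⊔ 𝔪 * I := by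
  let φ := algebraMap R (Localization.AtPrime 𝔪)
  obtain ⟨g, hsg, hg⟩ := s.exists_fin_subset_range hs 0
  have hgI : ∀ j, g j ∈ map φ I := fun j ↦ by
    rcases hg ⟨j, rfl⟩ with h | h
    · simp [h]
    · exact hI ▸ subset_span h
  choose p hp using fun j ↦ (IsLocalization.mem_map_algebraMap_iff 𝔪.primeCompl _).1 (hgI j)
  refine ⟨fun j ↦ (p j).1, fun j ↦ (p j).1.2, fun t ht ↦ ?_⟩
  have hIx : map φ I ≤ map φ (span (Set.range fun j ↦ ((p j).1 : R))) := by
    rw [hI, span_le]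
    refine hsg.trans ?_
    rintro _ ⟨j, rfl⟩
    rw [SetLike.mem_coe, ← mul_unit_mem_iff_mem _ (IsLocalization.map_units _ (p j).2), hp j]
    exact mem_map_of_mem φ (subset_span ⟨j, rfl⟩)
  obtain ⟨q, hq, hqt⟩ :=
    (IsLocalization.algebraMap_mem_map_algebraMap_iff 𝔪.primeCompl (Localization.AtPrime 𝔪) _
      t).1 (hIx (mem_map_of_mem φ ht))
  exact mem_sup_mul_of_mul_mem ‹_› hq ht hqt

end Ideal

namespace MaximalSpectrum

variable {R : Type*} [CommRing R]

theorem exists_mem_forall_sub_mem_mul {S : Set (MaximalSpectrum R)} (hS : S.Finite)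
    (I : Ideal R) (x : MaximalSpectrum R → R) (hx : ∀ 𝔪 ∈ S, x 𝔪 ∈ I) :
    ∃ b ∈ I, ∀ 𝔪 ∈ S, b - x 𝔪 ∈ 𝔪.asIdeal * I := by
  have := hS.to_subtype
  have hcop : Pairwise (IsCoprime on fun 𝔪 : S ↦ 𝔪.1.asIdeal) := fun 𝔪 𝔫 h ↦
    isCoprime_of_isMaximal fun he ↦ h (Subtype.ext (MaximalSpectrum.ext he))
  obtain ⟨b, hbI, hb⟩ :=
    Ideal.exists_mem_forall_sub_mem_mul hcop I (fun 𝔪 ↦ x 𝔪) fun 𝔪 ↦ hx 𝔪 𝔪.property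
  exact ⟨b, hbI, fun 𝔪 h𝔪 ↦ hb ⟨𝔪, h𝔪⟩⟩

theorem exists_ne_zero_forall_notMem_mul [IsDomain R] {I : Ideal R} (hI : I ≠ ⊥) (hfg : I.FG)
    {T : Set (MaximalSpectrum R)} (hT : T.Finite) :
    ∃ a ∈ I, a ≠ 0 ∧ ∀ 𝔪 ∈ T, a ∉ 𝔪.asIdeal * I := by
  choose w hwI hw using fun 𝔪 : MaximalSpectrum R ↦
    SetLike.not_le_iff_exists.1 (not_le_mul_self_of_fg hI hfg 𝔪.isMaximal.ne_top)
  obtain ⟨b, hbI, hb⟩ := exists_mem_forall_sub_mem_mul hT I w fun 𝔪 _ ↦ hwI 𝔪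
  have hbT : ∀ 𝔪 ∈ T, b ∉ 𝔪.asIdeal * I := fun 𝔪 h𝔪 hb𝔪 ↦
    hw 𝔪 (by simpa using sub_mem hb𝔪 (hb 𝔪 h𝔪))
  rcases T.eq_empty_or_nonempty with rfl | ⟨𝔪, h𝔪⟩
  · obtain ⟨a, haI, ha⟩ := Submodule.exists_mem_ne_zero_of_ne_bot hI
    exact ⟨a, haI, ha, by simp⟩
  · exact ⟨b, hbI, fun hb0 ↦ hbT 𝔪 h𝔪 (hb0 ▸ zero_mem _), hbT⟩

end MaximalSpectrum

/-- Let `R` be a commutative domain of finite character and `k ≥ 2`.  If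
`I` is a nonzero finitely generated ideal of `R` such that `I R_𝔪` can be generated by at
most `k` elements for every maximal ideal `𝔪` of `R`, then `I` can be generated by at most
`k` elements. -/
theorem stmt19 (R : Type u) [CommRing R] [IsDomain R]
    (hfc : ∀ r : R, r ≠ 0 → {𝔪 : MaximalSpectrum R | r ∈ 𝔪.asIdeal}.Finite)
    (k : ℕ) (hk : 2 ≤ k)
    (I : Ideal R) (hI0 : I ≠ ⊥) (hIfg : I.FG)
    (hloc : ∀ (𝔪 : Ideal R) (h𝔪 : 𝔪.IsMaximal),
      ∃ s : Finset (Localization.AtPrime 𝔪), s.card ≤ k ∧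
        Ideal.map (algebraMap R (Localization.AtPrime 𝔪)) I = Ideal.span ↑s) :
    ∃ s : Finset R, s.card ≤ k ∧ I = Ideal.span ↑s := by
  classical
  obtain ⟨n, rfl⟩ : ∃ n, k = n + 1 := ⟨k - 1, by omega⟩
  obtain ⟨a₀, ha₀I, ha₀⟩ := Submodule.exists_mem_ne_zero_of_ne_bot hI0
  obtain ⟨a, haI, ha, haT⟩ :=
    MaximalSpectrum.exists_ne_zero_forall_notMem_mul hI0 hIfg (hfc a₀ ha₀)
  have hy : ∀ 𝔪 : MaximalSpectrum R, ∃ y : Fin n → R,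
      (∀ j, y j ∈ I) ∧ I ≤ span (insert a (Set.range y)) ⊔ 𝔪.asIdeal * I := by
    intro 𝔪
    by_cases h𝔪 : a₀ ∈ 𝔪.asIdeal
    · obtain ⟨s, hs, hsI⟩ := hloc _ 𝔪.isMaximal
      obtain ⟨x, hxI, hx⟩ := exists_fin_le_span_range_sup_mul_of_map_eq_span hs hsI
      exact exists_fin_le_span_insert_sup_mul 𝔪.isMaximal hxI hx haI (haT 𝔪 h𝔪)
    · exact ⟨fun _ ↦ a₀, fun _ ↦ ha₀I, le_span_sup_mul_of_notMem 𝔪.isMaximal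
        (Set.mem_insert_of_mem _ ⟨⟨0, by omega⟩, rfl⟩) h𝔪⟩
  choose y hyI hy using hy
  choose b hbI hb using fun j ↦
    MaximalSpectrum.exists_mem_forall_sub_mem_mul (hfc a ha) I (y · j) fun 𝔪 _ ↦ hyI 𝔪 j
  refine ⟨Finset.univ.image (Fin.cons a b), Finset.card_image_le.trans (by simp), ?_⟩
  rw [Finset.coe_image, Finset.coe_univ, Set.image_univ, Fin.range_cons]
  refine le_antisymm (le_of_forall_le_sup_mul hIfg fun 𝔪 h𝔪 ↦ ?_) ?_
  · by_cases ha𝔪 : a ∈ 𝔪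
    · exact (hy ⟨𝔪, h𝔪⟩).trans
        (sup_le (span_insert_range_le_sup a fun j ↦ hb j ⟨𝔪, h𝔪⟩ ha𝔪) le_sup_right)
    · exact le_span_sup_mul_of_notMem h𝔪 (Set.mem_insert _ _) ha𝔪
  · exact span_le.2 (Set.insert_subset haI (Set.range_subset_iff.2 hbI))
end
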